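/- arXiv:2106.08665 — 17 statements merged into one kernel-verified Lean document; each statement's English description precedes it below -/
import Mathlib

section
/- Let f : [0,∞) → M (M a unital magma with cancellation, neutral element 0) and h : [0,∞) → [0,∞) satisfy f(s+t) = f(s) + f(h(s)·t) for all s,t ≥ 0, with f not identically 0. If inf{s : h(s)=0} = 0 and the kernel of h is nonempty, then there exist a ∈ M\{0} and b > 0 such that f(0)=0, f(s)=a for all s>0, h(0)=b, and h(s)=0 for all s>0. -/
/-- CGS equation on [0,∞) with Ker(h) ≠ ∅ and inf Ker(h) = 0. -/
theorem stmt0 {M : Type*} (add : M → M → M) (zero : M)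
    (hzl : ∀ a : M, add zero a = a) (hzr : ∀ a : M, add a zero = a)
    (cancl : ∀ a b c : M, add a b = add a c → b = c)
    (cancr : ∀ a b c : M, add b a = add c a → b = c)
    (f : ℝ → M) (h : ℝ → ℝ)
    (hhnn : ∀ s : ℝ, 0 ≤ s → 0 ≤ h s)
    (heq : ∀ s t : ℝ, 0 ≤ s → 0 ≤ t → f (s + t) = add (f s) (f (h s * t)))
    (hfnz : ∃ s : ℝ, 0 ≤ s ∧ f s ≠ zero)
    (hker : ∃ s : ℝ, 0 ≤ s ∧ h s = 0)
    (hinf : sInf {s : ℝ | 0 ≤ s ∧ h s = 0} = 0) :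
    ∃ a : M, a ≠ zero ∧ ∃ b : ℝ, 0 < b ∧
      f 0 = zero ∧ (∀ s : ℝ, 0 < s → f s = a) ∧
      h 0 = b ∧ (∀ s : ℝ, 0 < s → h s = 0) := by
  obtain ⟨s₀, hs₀nn, hs₀⟩ := hker
  -- f 0 = zero
  have f0 : f 0 = zero := by
    have h1 := heq 0 0 le_rfl le_rfl
    simp only [add_zero, mul_zero] at h1
    exact cancl (f 0) (f 0) zero (h1.symm.trans (hzr (f 0)).symm)
  -- past a kernel point, f is constant
  have ker_const : ∀ u, 0 ≤ u → h u = 0 → ∀ v, u ≤ v → f v = f u := by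
    intro u hu hu0 v huv
    have h1 := heq u (v - u) hu (by linarith)
    rw [hu0, zero_mul, f0, hzr] at h1
    simpa using h1
  -- h 0 ≠ 0
  have h0pos : 0 < h 0 := by
    rcases (hhnn 0 le_rfl).lt_or_eq with hlt | heq0
    · exact hlt
    · exfalso
      obtain ⟨s, hs, hfs⟩ := hfnz
      exact hfs ((ker_const 0 le_rfl heq0.symm s hs).trans f0)
  -- small kernel points
  have small : ∀ ε : ℝ, 0 < ε → ∃ u, 0 ≤ u ∧ h u = 0 ∧ u < ε := by
    intro ε hε
    have hne : Set.Nonempty {s : ℝ | 0 ≤ s ∧ h s = 0} := ⟨s₀, hs₀nn, hs₀⟩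
    obtain ⟨u, hu, hlt⟩ := exists_lt_of_csInf_lt hne (by rw [hinf]; exact hε)
    exact ⟨u, hu.1, hu.2, hlt⟩
  -- f constant on (0, ∞)
  have fconst : ∀ s, 0 < s → f s = f s₀ := by
    intro s hs
    obtain ⟨u, hunn, hu0, hult⟩ := small s hs
    have h1 : f s = f u := ker_const u hunn hu0 s hult.le
    rcases le_total u s₀ with hle | hle
    · rw [h1, ← ker_const u hunn hu0 s₀ hle]
    · rw [h1, ker_const s₀ hs₀nn hs₀ u hle]
  -- the constant is nonzero
  have ane : f s₀ ≠ zero := by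
    obtain ⟨s, hs, hfs⟩ := hfnz
    have hspos : 0 < s := by
      rcases hs.lt_or_eq with hlt | heq0
      · exact hlt
      · exact absurd (heq0 ▸ f0) hfs
    exact fun hc => hfs ((fconst s hspos).trans hc)
  -- h vanishes on (0, ∞)
  have hzero : ∀ s, 0 < s → h s = 0 := by
    intro s hs
    by_contra hns
    have hpos : 0 < h s := (hhnn s hs.le).lt_of_ne (Ne.symm hns)
    have h1 := heq s 1 hs.le zero_le_one
    rw [mul_one] at h1
    have h2 : f (s + 1) = f s₀ := fconst (s + 1) (by linarith)
    have h3 : f s = f s₀ := fconst s hs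
    have h4 : f (h s) = f s₀ := fconst (h s) hpos
    rw [h2, h3, h4] at h1
    exact ane (cancl (f s₀) (f s₀) zero (by rw [← h1, hzr]))
  exact ⟨f s₀, ane, h 0, h0pos, f0, fconst, rfl, hzero⟩
end

section
/- Let f : [0,∞) → M (M a unital magma with cancellation) and h : [0,∞) → [0,∞) satisfy f(s+t) = f(s) + f(h(s)·t) for all s,t ≥ 0, with f not identically 0. If s₀ := inf{s : h(s)=0} > 0 and Ker(h) ≠ ∅, then there exists a ∈ M\{0} such that f(s)=0 for s ∈ [0,s₀), f(s)=a for s ≥ s₀, h(s) = s₀/(s₀−s) for s ∈ [0,s₀), and h(s)=0 for s ≥ s₀. -/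
/-- CGS equation on [0,∞) with Ker(h) ≠ ∅ and s₀ = inf Ker(h) > 0. -/
theorem stmt1 {M : Type*} (add : M → M → M) (zero : M)
    (hzl : ∀ a : M, add zero a = a) (hzr : ∀ a : M, add a zero = a)
    (cancl : ∀ a b c : M, add a b = add a c → b = c)
    (cancr : ∀ a b c : M, add b a = add c a → b = c)
    (f : ℝ → M) (h : ℝ → ℝ)
    (hhnn : ∀ s : ℝ, 0 ≤ s → 0 ≤ h s)
    (heq : ∀ s t : ℝ, 0 ≤ s → 0 ≤ t → f (s + t) = add (f s) (f (h s * t)))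
    (hfnz : ∃ s : ℝ, 0 ≤ s ∧ f s ≠ zero)
    (hker : ∃ s : ℝ, 0 ≤ s ∧ h s = 0)
    (s₀ : ℝ) (hs₀ : s₀ = sInf {s : ℝ | 0 ≤ s ∧ h s = 0}) (hs₀pos : 0 < s₀) :
    ∃ a : M, a ≠ zero ∧
      (∀ s : ℝ, 0 ≤ s → s < s₀ → f s = zero) ∧
      (∀ s : ℝ, s₀ ≤ s → f s = a) ∧
      (∀ s : ℝ, 0 ≤ s → s < s₀ → h s = s₀ / (s₀ - s)) ∧
      (∀ s : ℝ, s₀ ≤ s → h s = 0) := by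
  obtain ⟨k, hk0, hhk⟩ := hker
  have hbdd : BddBelow {s : ℝ | 0 ≤ s ∧ h s = 0} := ⟨0, fun x hx => hx.1⟩
  have hs₀le : ∀ s : ℝ, 0 ≤ s → h s = 0 → s₀ ≤ s := by
    intro s hs hhs
    rw [hs₀]; exact csInf_le hbdd ⟨hs, hhs⟩
  -- f 0 = zero
  have hf0 : f 0 = zero := by
    have h1 := heq 0 0 le_rfl le_rfl
    rw [add_zero, mul_zero] at h1
    exact cancl (f 0) (f 0) zero (by rw [hzr]; exact h1.symm)
  -- f is constant to the right of any kernel point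
  have hconst : ∀ k' : ℝ, 0 ≤ k' → h k' = 0 → ∀ x : ℝ, k' ≤ x → f x = f k' := by
    intro k' hk' hh x hx
    have h1 := heq k' (x - k') hk' (by linarith)
    rw [hh, zero_mul, hf0, hzr, show k' + (x - k') = x from by ring] at h1
    exact h1
  set a := f k with ha_def
  -- every kernel point has value a
  have hka : ∀ k' : ℝ, 0 ≤ k' → h k' = 0 → f k' = a := by
    intro k' hk' hh
    have h1 := hconst k' hk' hh (max k k') (le_max_right _ _)
    have h2 := hconst k hk0 hhk (max k k') (le_max_left _ _)
    exact h1.symm.trans h2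
  -- Step D: for s below a kernel point with h s > 0, f s = zero
  have stepD : ∀ k' : ℝ, 0 ≤ k' → h k' = 0 → ∀ s : ℝ, 0 ≤ s → s ≤ k' → 0 < h s →
      f s = zero := by
    intro k' hk'0 hk'z s hs hsk hpos
    have hfa : ∀ x : ℝ, k' ≤ x → f x = a := fun x hx =>
      (hconst k' hk'0 hk'z x hx).trans (hka k' hk'0 hk'z)
    set u := max 0 (k' / h s) with hu
    have hu0 : 0 ≤ u := le_max_left _ _
    have hks : 0 ≤ k' - s := by linarith
    have ht0 : 0 ≤ k' - s + u := by linarith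
    have hu2 : k' ≤ u * h s := (div_le_iff₀ hpos).mp (le_max_right _ _)
    have harg : k' ≤ h s * (k' - s + u) := by nlinarith [mul_nonneg hpos.le hks]
    have h1 := heq s (k' - s + u) hs ht0
    rw [hfa (s + (k' - s + u)) (by linarith), hfa _ harg] at h1
    exact cancr a (f s) zero (by rw [hzl]; exact h1.symm)
  -- Step E: h vanishes to the right of any kernel point
  have stepE : ∀ k' : ℝ, 0 ≤ k' → h k' = 0 → ∀ s : ℝ, k' ≤ s → h s = 0 := by
    intro k' hk'0 hk'z s hsk
    by_contra hne
    have hs0 : 0 ≤ s := le_trans hk'0 hsk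
    have hpos : 0 < h s := lt_of_le_of_ne (hhnn s hs0) (Ne.symm hne)
    have hfa : ∀ x : ℝ, k' ≤ x → f x = a := fun x hx =>
      (hconst k' hk'0 hk'z x hx).trans (hka k' hk'0 hk'z)
    have hzall : ∀ t : ℝ, 0 ≤ t → f (h s * t) = zero := by
      intro t ht
      have h1 := heq s t hs0 ht
      rw [hfa (s + t) (by linarith), hfa s hsk] at h1
      exact cancl a (f (h s * t)) zero (by rw [hzr]; exact h1.symm)
    obtain ⟨w, hw0, hwne⟩ := hfnz
    have h2 := hzall (w / h s) (by positivity)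
    rw [show h s * (w / h s) = w from by field_simp] at h2
    exact hwne h2
  -- a ≠ zero
  have hane : a ≠ zero := by
    intro ha
    obtain ⟨w, hw0, hwne⟩ := hfnz
    apply hwne
    by_cases hc : h w = 0
    · rw [hka w hw0 hc, ha]
    · have hpos : 0 < h w := lt_of_le_of_ne (hhnn w hw0) (Ne.symm hc)
      by_cases hwk : w ≤ k
      · exact stepD k hk0 hhk w hw0 hwk hpos
      · exact absurd (stepE k hk0 hhk w (le_of_lt (not_le.mp hwk))) hc
  -- h s₀ = 0
  have hs₀z : h s₀ = 0 := by
    by_contra hne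
    have hs₀nn : 0 ≤ s₀ := hs₀pos.le
    have hpos : 0 < h s₀ := lt_of_le_of_ne (hhnn s₀ hs₀nn) (Ne.symm hne)
    have hs₀k : s₀ ≤ k := hs₀le k hk0 hhk
    have hfs₀ : f s₀ = zero := stepD k hk0 hhk s₀ hs₀nn hs₀k hpos
    have hgt : ∀ x : ℝ, s₀ < x → f x = a := by
      intro x hx
      have hlt : sInf {s : ℝ | 0 ≤ s ∧ h s = 0} < x := hs₀ ▸ hx
      obtain ⟨b, hb, hbx⟩ := exists_lt_of_csInf_lt (⟨k, hk0, hhk⟩ : Set.Nonempty {s : ℝ | 0 ≤ s ∧ h s = 0}) hlt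
      exact (hconst b hb.1 hb.2 x hbx.le).trans (hka b hb.1 hb.2)
    have hall : ∀ x : ℝ, 0 < x → f x = a := by
      intro x hx
      have hdp : 0 < x / h s₀ := div_pos hx hpos
      have h1 := heq s₀ (x / h s₀) hs₀nn hdp.le
      rw [hfs₀, hzl, show h s₀ * (x / h s₀) = x from by field_simp] at h1
      rw [← h1]
      exact hgt _ (by linarith)
    have hs2 : (0:ℝ) < s₀ / 2 := by linarith
    have hhs2 : h (s₀ / 2) ≠ 0 := fun hz => absurd (hs₀le _ hs2.le hz) (by linarith)
    have hpos2 : 0 < h (s₀ / 2) := lt_of_le_of_ne (hhnn _ hs2.le) (Ne.symm hhs2)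
    have h1 : f (s₀ / 2) = zero := stepD k hk0 hhk _ hs2.le (by linarith) hpos2
    have h2 : f (s₀ / 2) = a := hall _ hs2
    exact hane (h2.symm.trans h1)
  -- the four conclusions
  have hfzero : ∀ s : ℝ, 0 ≤ s → s < s₀ → f s = zero := by
    intro s hs hss
    have hne : h s ≠ 0 := fun hz => absurd (hs₀le s hs hz) (not_le.mpr hss)
    have hpos : 0 < h s := lt_of_le_of_ne (hhnn s hs) (Ne.symm hne)
    exact stepD s₀ hs₀pos.le hs₀z s hs hss.le hpos
  have hfa' : ∀ s : ℝ, s₀ ≤ s → f s = a := fun s hs =>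
    (hconst s₀ hs₀pos.le hs₀z s hs).trans (hka s₀ hs₀pos.le hs₀z)
  have hhzero : ∀ s : ℝ, s₀ ≤ s → h s = 0 := stepE s₀ hs₀pos.le hs₀z
  refine ⟨a, hane, hfzero, hfa', ?_, hhzero⟩
  intro s hs hss
  have hne : h s ≠ 0 := fun hz => absurd (hs₀le s hs hz) (not_le.mpr hss)
  have hpos : 0 < h s := lt_of_le_of_ne (hhnn s hs) (Ne.symm hne)
  have hfs : f s = zero := hfzero s hs hss
  have key : ∀ t : ℝ, 0 ≤ t → f (s + t) = f (h s * t) := by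
    intro t ht
    have h1 := heq s t hs ht
    rw [hfs, hzl] at h1
    exact h1
  have h1 : s₀ ≤ h s * (s₀ - s) := by
    by_contra hc
    push_neg at hc
    have hk1 := key (s₀ - s) (by linarith)
    rw [show s + (s₀ - s) = s₀ from by ring] at hk1
    have l := hfa' s₀ le_rfl
    have r := hfzero _ (mul_nonneg hpos.le (by linarith)) hc
    exact hane ((l.symm.trans hk1).trans r)
  have h2 : h s * (s₀ - s) ≤ s₀ := by
    by_contra hc
    push_neg at hc
    have ht : 0 < s₀ / h s := div_pos hs₀pos hpos
    have hk1 := key (s₀ / h s) ht.le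
    rw [show h s * (s₀ / h s) = s₀ from by field_simp] at hk1
    have hlt : s + s₀ / h s < s₀ := by
      have hdl : s₀ / h s < s₀ - s := (div_lt_iff₀ hpos).mpr (by linarith)
      linarith
    have l := hfzero _ (by linarith) hlt
    have r := hfa' s₀ le_rfl
    exact hane (r.symm.trans (hk1.symm.trans l))
  rw [eq_div_iff (by linarith : s₀ - s ≠ 0)]
  linarith
end

section
/- Conversely, for any s₀ > 0 and a ∈ M\{0}, the pair (f,h) defined by f(s)=0 for s∈[0,s₀), f(s)=a for s≥s₀, h(s)=s₀/(s₀−s) for s∈[0,s₀), h(s)=0 for s≥s₀, satisfies f(s+t) = f(s) + f(h(s)·t) for all s,t ≥ 0. -/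
/-- the piecewise pair (f,h) from STATEMENT 1 indeed solves the equation. -/
theorem stmt2 {M : Type*} (add : M → M → M) (zero : M)
    (hzl : ∀ a : M, add zero a = a) (hzr : ∀ a : M, add a zero = a)
    (cancl : ∀ a b c : M, add a b = add a c → b = c)
    (cancr : ∀ a b c : M, add b a = add c a → b = c)
    (s₀ : ℝ) (hs₀pos : 0 < s₀) (a : M) (ha : a ≠ zero)
    (f : ℝ → M) (h : ℝ → ℝ)
    (hf1 : ∀ s : ℝ, 0 ≤ s → s < s₀ → f s = zero)
    (hf2 : ∀ s : ℝ, s₀ ≤ s → f s = a)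
    (hh1 : ∀ s : ℝ, 0 ≤ s → s < s₀ → h s = s₀ / (s₀ - s))
    (hh2 : ∀ s : ℝ, s₀ ≤ s → h s = 0) :
    ∀ s t : ℝ, 0 ≤ s → 0 ≤ t → f (s + t) = add (f s) (f (h s * t)) := by
  intro s t hs ht
  rcases lt_or_ge s s₀ with hlt | hge
  · rw [hf1 s hs hlt, hzl, hh1 s hs hlt]
    have hd : 0 < s₀ - s := by linarith
    have hpos : 0 ≤ s₀ / (s₀ - s) * t := by positivity
    rcases lt_or_ge (s + t) s₀ with hst | hst
    · rw [hf1 _ (by linarith) hst, hf1 _ hpos]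
      rw [div_mul_eq_mul_div, div_lt_iff₀ hd]
      nlinarith
    · rw [hf2 _ hst, hf2]
      rw [div_mul_eq_mul_div, le_div_iff₀ hd]
      nlinarith
  · rw [hf2 s hge, hh2 s hge, zero_mul, hf1 0 le_rfl hs₀pos, hzr,
      hf2 _ (by linarith)]
end

section
/- Let f : V → M be a non-zero function on a vector space V over a field F and h : V → F satisfy f(s+t) = f(s) + f(h(s)·t) for all s,t ∈ V, where M is a unital magma with cancellation. Then h(s) ≠ 0 for every s ∈ V. -/
/-- CGS equation on a vector space V: Ker(h) = ∅. -/
theorem stmt4 {F V M : Type*} [Field F] [AddCommGroup V] [Module F V]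
    (add : M → M → M) (zero : M)
    (hzl : ∀ a : M, add zero a = a) (hzr : ∀ a : M, add a zero = a)
    (cancl : ∀ a b c : M, add a b = add a c → b = c)
    (cancr : ∀ a b c : M, add b a = add c a → b = c)
    (f : V → M) (h : V → F)
    (heq : ∀ s t : V, f (s + t) = add (f s) (f (h s • t)))
    (hfnz : ∃ s : V, f s ≠ zero) :
    ∀ s : V, h s ≠ 0 := by
  rintro s hs
  obtain ⟨w, hw⟩ := hfnz
  -- from heq s 0 : f s = add (f s) (f 0), so f 0 = zero
  have h0' : f 0 = zero := by
    have := heq s 0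
    simp only [add_zero, smul_zero] at this
    exact cancl (f s) (f 0) zero (by rw [← this, hzr])
  -- f (s + t) = f s for all t
  have hconst : ∀ t : V, f (s + t) = f s := by
    intro t
    have := heq s t
    rw [hs, zero_smul, h0', hzr] at this
    exact this
  -- f s = zero : take t = -s
  have hsz : f s = zero := by
    have := hconst (-s)
    simp at this
    rw [← this, h0']
  -- f w = f s = zero
  have := hconst (w - s)
  simp at this
  exact hw (this.trans hsz)
end

section
/- Let M be a commutative unital magma with cancellation, f : [0,∞) → M injective, g : [0,∞) → [0,∞), satisfying f(s + g(s)·t) = f(s) + f(t) for all s,t ≥ 0. Then g(s) = (g(1)−1)·s + 1 for all s ≥ 0; in particular g is affine. -/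
/-- for injective f, g is affine: g(s) = (g(1)-1)s + 1. -/
theorem stmt5 {M : Type*} (add : M → M → M) (zero : M)
    (hcomm : ∀ a b : M, add a b = add b a)
    (hzl : ∀ a : M, add zero a = a) (hzr : ∀ a : M, add a zero = a)
    (cancl : ∀ a b c : M, add a b = add a c → b = c)
    (cancr : ∀ a b c : M, add b a = add c a → b = c)
    (f : ℝ → M) (g : ℝ → ℝ)
    (hgnn : ∀ s : ℝ, 0 ≤ s → 0 ≤ g s)
    (hfinj : ∀ s t : ℝ, 0 ≤ s → 0 ≤ t → f s = f t → s = t)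
    (heq : ∀ s t : ℝ, 0 ≤ s → 0 ≤ t → f (s + g s * t) = add (f s) (f t)) :
    ∀ s : ℝ, 0 ≤ s → g s = (g 1 - 1) * s + 1 := by
  intro s hs
  have h1 : (0:ℝ) ≤ s + g s * 1 := by
    have := hgnn s hs; nlinarith
  have h2 : (0:ℝ) ≤ 1 + g 1 * s := by
    have := hgnn 1 zero_le_one; nlinarith
  have key : s + g s * 1 = 1 + g 1 * s := by
    apply hfinj _ _ h1 h2
    rw [heq s 1 hs zero_le_one, heq 1 s zero_le_one hs, hcomm]
  linarith
end

section
/- Let M be a commutative unital magma with cancellation, f : [0,∞) → M injective and g : [0,∞) → [0,∞) satisfy f(s + g(s)·t) = f(s) + f(t) for all s,t ≥ 0. If g(1) = 1, then g ≡ 1 and f is additive: f(s+t) = f(s) + f(t) for all s,t ≥ 0. -/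
/-- for injective f with g(1) = 1, g ≡ 1 and f is additive. -/
theorem stmt6 {M : Type*} (add : M → M → M) (zero : M)
    (hcomm : ∀ a b : M, add a b = add b a)
    (hzl : ∀ a : M, add zero a = a) (hzr : ∀ a : M, add a zero = a)
    (cancl : ∀ a b c : M, add a b = add a c → b = c)
    (cancr : ∀ a b c : M, add b a = add c a → b = c)
    (f : ℝ → M) (g : ℝ → ℝ)
    (hgnn : ∀ s : ℝ, 0 ≤ s → 0 ≤ g s)
    (hfinj : ∀ s t : ℝ, 0 ≤ s → 0 ≤ t → f s = f t → s = t)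
    (heq : ∀ s t : ℝ, 0 ≤ s → 0 ≤ t → f (s + g s * t) = add (f s) (f t))
    (hg1 : g 1 = 1) :
    (∀ s : ℝ, 0 ≤ s → g s = 1) ∧
    (∀ s t : ℝ, 0 ≤ s → 0 ≤ t → f (s + t) = add (f s) (f t)) := by
  have key : ∀ s : ℝ, 0 ≤ s → g s = 1 := by
    intro s hs
    have h1 : f (s + g s * 1) = f (1 + g 1 * s) := by
      rw [heq s 1 hs zero_le_one, heq 1 s zero_le_one hs, hcomm]
    have h2 := hfinj _ _ (by nlinarith [hgnn s hs]) (by nlinarith [hg1]) h1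
    rw [hg1] at h2; linarith
  refine ⟨key, fun s t hs ht => ?_⟩
  have := heq s t hs ht
  rwa [key s hs, one_mul] at this
end

section
/- Let M be a commutative unital magma with cancellation, f : [0,∞) → M injective and g : [0,∞) → [0,∞) satisfy f(s + g(s)·t) = f(s) + f(t) for all s,t ≥ 0. If g(1) ≠ 1, then with α := g(1)−1 > 0 we have g(s) = αs + 1 for all s ≥ 0, and there exists an injective additive function a : [0,∞) → M such that f(s) = a(log(αs+1)) for all s ≥ 0. -/
/-!
Since `f` is injective and `+` is commutative, `f (s + g s * t) = f (t + g t * s)` forces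
`s + g s * t = t + g t * s`; at `t = 1` this makes `g` affine, `g s = α s + 1`, and `g ≥ 0` on
`[0, ∞)` rules out `α < 0`. Then `s + g s * t = s + t + α s t`, which the substitution
`s = (eˣ - 1) / α` conjugates to `x + y`, so `a x := f ((eˣ - 1) / α)` is additive.
-/

open Real

theorem add_mul_symm_of_injOn {M : Type*} (add : M → M → M) {f : ℝ → M} {g : ℝ → ℝ}
    (hcomm : ∀ a b : M, add a b = add b a)
    (hgnn : ∀ s : ℝ, 0 ≤ s → 0 ≤ g s)
    (hfinj : ∀ s t : ℝ, 0 ≤ s → 0 ≤ t → f s = f t → s = t)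
    (heq : ∀ s t : ℝ, 0 ≤ s → 0 ≤ t → f (s + g s * t) = add (f s) (f t))
    {s t : ℝ} (hs : 0 ≤ s) (ht : 0 ≤ t) :
    s + g s * t = t + g t * s :=
  hfinj _ _ (add_nonneg hs (mul_nonneg (hgnn s hs) ht)) (add_nonneg ht (mul_nonneg (hgnn t ht) hs))
    (by rw [heq s t hs ht, heq t s ht hs, hcomm])

theorem eq_affine_of_add_mul_symm {g : ℝ → ℝ}
    (hsymm : ∀ s t : ℝ, 0 ≤ s → 0 ≤ t → s + g s * t = t + g t * s) {s : ℝ} (hs : 0 ≤ s) :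
    g s = (g 1 - 1) * s + 1 := by
  linarith [hsymm s 1 hs zero_le_one]

theorem nonneg_of_forall_affine_nonneg {α : ℝ} (h : ∀ s : ℝ, 0 ≤ s → 0 ≤ α * s + 1) : 0 ≤ α := by
  by_contra! hα
  have := h (-2 / α) (div_nonneg_of_nonpos (by norm_num) hα.le)
  rw [mul_div_cancel₀ _ hα.ne] at this
  norm_num at this

/-- The inverse of `s ↦ log (α s + 1)`. -/
noncomputable def expShift (α x : ℝ) : ℝ := (exp x - 1) / α

theorem expShift_nonneg {α x : ℝ} (hα : 0 < α) (hx : 0 ≤ x) : 0 ≤ expShift α x :=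
  div_nonneg (by linarith [one_le_exp hx]) hα.le

theorem expShift_add {α : ℝ} (hα : α ≠ 0) (x y : ℝ) :
    expShift α (x + y) = expShift α x + (α * expShift α x + 1) * expShift α y := by
  simp only [expShift, exp_add]
  field_simp
  ring

theorem expShift_log {α s : ℝ} (hα : α ≠ 0) (hs : 0 < α * s + 1) :
    expShift α (log (α * s + 1)) = s := by
  rw [expShift, exp_log hs]
  field_simp
  ring

theorem expShift_injective {α : ℝ} (hα : α ≠ 0) : Function.Injective (expShift α) := by
  intro x y h
  simp only [expShift, div_left_inj' hα, sub_left_inj] at h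
  exact exp_injective h

theorem stmt7_general {M : Type*} (add : M → M → M)
    (hcomm : ∀ a b : M, add a b = add b a)
    (f : ℝ → M) (g : ℝ → ℝ)
    (hgnn : ∀ s : ℝ, 0 ≤ s → 0 ≤ g s)
    (hfinj : ∀ s t : ℝ, 0 ≤ s → 0 ≤ t → f s = f t → s = t)
    (heq : ∀ s t : ℝ, 0 ≤ s → 0 ≤ t → f (s + g s * t) = add (f s) (f t))
    (hg1 : g 1 ≠ 1) :
    0 < g 1 - 1 ∧
    (∀ s : ℝ, 0 ≤ s → g s = (g 1 - 1) * s + 1) ∧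
    ∃ a : ℝ → M,
      (∀ x y : ℝ, 0 ≤ x → 0 ≤ y → a x = a y → x = y) ∧
      (∀ x y : ℝ, 0 ≤ x → 0 ≤ y → a (x + y) = add (a x) (a y)) ∧
      (∀ s : ℝ, 0 ≤ s → f s = a (Real.log ((g 1 - 1) * s + 1))) := by
  set α := g 1 - 1
  have hg : ∀ s : ℝ, 0 ≤ s → g s = α * s + 1 := fun s hs =>
    eq_affine_of_add_mul_symm (fun _ _ => add_mul_symm_of_injOn add hcomm hgnn hfinj heq) hs
  have hα : 0 < α := lt_of_le_of_ne
    (nonneg_of_forall_affine_nonneg fun s hs => hg s hs ▸ hgnn s hs)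
    (fun h => hg1 (by linarith))
  refine ⟨hα, hg, f ∘ expShift α, ?_, ?_, ?_⟩
  · intro x y hx hy hxy
    exact expShift_injective hα.ne'
      (hfinj _ _ (expShift_nonneg hα hx) (expShift_nonneg hα hy) hxy)
  · intro x y hx hy
    have hs := expShift_nonneg hα hx
    rw [Function.comp_apply, expShift_add hα.ne', ← hg _ hs,
      heq _ _ hs (expShift_nonneg hα hy)]
    rfl
  · intro s hs
    rw [Function.comp_apply, expShift_log hα.ne' (by positivity)]

/-- for injective f with g(1) ≠ 1, g(s) = αs+1 with α := g(1)-1 > 0 and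
f(s) = a(log(αs+1)) for an injective additive a : [0,∞) → M. -/
theorem stmt7 {M : Type*} (add : M → M → M) (zero : M)
    (hcomm : ∀ a b : M, add a b = add b a)
    (hzl : ∀ a : M, add zero a = a) (hzr : ∀ a : M, add a zero = a)
    (cancl : ∀ a b c : M, add a b = add a c → b = c)
    (cancr : ∀ a b c : M, add b a = add c a → b = c)
    (f : ℝ → M) (g : ℝ → ℝ)
    (hgnn : ∀ s : ℝ, 0 ≤ s → 0 ≤ g s)
    (hfinj : ∀ s t : ℝ, 0 ≤ s → 0 ≤ t → f s = f t → s = t)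
    (heq : ∀ s t : ℝ, 0 ≤ s → 0 ≤ t → f (s + g s * t) = add (f s) (f t))
    (hg1 : g 1 ≠ 1) :
    0 < g 1 - 1 ∧
    (∀ s : ℝ, 0 ≤ s → g s = (g 1 - 1) * s + 1) ∧
    ∃ a : ℝ → M,
      (∀ x y : ℝ, 0 ≤ x → 0 ≤ y → a x = a y → x = y) ∧
      (∀ x y : ℝ, 0 ≤ x → 0 ≤ y → a (x + y) = add (a x) (a y)) ∧
      (∀ s : ℝ, 0 ≤ s → f s = a (Real.log ((g 1 - 1) * s + 1))) :=
  stmt7_general add hcomm f g hgnn hfinj heq hg1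
end

section
/- Let f : [0,∞) → ℝ be non-zero and g : [0,∞) → [0,∞) satisfy f(s + g(s)·t) = f(s) + f(t) for all s,t ≥ 0. If f is right continuous at some point, then f is right continuous at every point of [0,∞). -/
/-- right continuity at one point propagates to all points of [0,∞). -/
theorem stmt8 (f : ℝ → ℝ) (g : ℝ → ℝ)
    (hgnn : ∀ s : ℝ, 0 ≤ s → 0 ≤ g s)
    (heq : ∀ s t : ℝ, 0 ≤ s → 0 ≤ t → f (s + g s * t) = f s + f t)
    (hfnz : ∃ s : ℝ, 0 ≤ s ∧ f s ≠ 0)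
    (hrc : ∃ s : ℝ, 0 ≤ s ∧ ContinuousWithinAt f (Set.Ici s) s) :
    ∀ s : ℝ, 0 ≤ s → ContinuousWithinAt f (Set.Ici s) s := by
  obtain ⟨a, ha, hfa⟩ := hfnz
  have hf0 : f 0 = 0 := by
    have h := heq a 0 ha le_rfl
    simp at h
    linarith
  have hgpos : ∀ s : ℝ, 0 ≤ s → 0 < g s := by
    intro s hs
    rcases (hgnn s hs).lt_or_eq with h | h
    · exact h
    · exfalso
      apply hfa
      have h2 := heq s a hs ha
      rw [← h] at h2
      simp at h2
      linarith
  obtain ⟨s₀, hs₀, hc₀⟩ := hrc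
  have hrc0 : ContinuousWithinAt f (Set.Ici 0) 0 := by
    have hmap : Set.MapsTo (fun t : ℝ => s₀ + g s₀ * t) (Set.Ici 0) (Set.Ici s₀) := by
      intro t ht
      have := mul_nonneg (hgnn s₀ hs₀) ht
      simp only [Set.mem_Ici] at *
      linarith
    have h1 : ContinuousWithinAt (fun t : ℝ => s₀ + g s₀ * t) (Set.Ici 0) 0 :=
      (continuous_const.add (continuous_const.mul continuous_id)).continuousWithinAt
    have h2 : ContinuousWithinAt (f ∘ fun t : ℝ => s₀ + g s₀ * t) (Set.Ici 0) 0 :=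
      ContinuousWithinAt.comp (by simpa using hc₀) h1 hmap
    have h3 : ContinuousWithinAt (fun t : ℝ => f (s₀ + g s₀ * t) - f s₀) (Set.Ici 0) 0 :=
      h2.sub continuousWithinAt_const
    refine h3.congr ?_ ?_
    · intro t ht
      rw [heq s₀ t hs₀ ht]; ring
    · rw [heq s₀ 0 hs₀ le_rfl, hf0]; ring
  intro s hs
  have hgs := hgpos s hs
  have hmap : Set.MapsTo (fun x : ℝ => (x - s) / g s) (Set.Ici s) (Set.Ici 0) := by
    intro x hx
    simp only [Set.mem_Ici] at *
    exact div_nonneg (by linarith) hgs.le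
  have h1 : ContinuousWithinAt (fun x : ℝ => (x - s) / g s) (Set.Ici s) s := by
    apply Continuous.continuousWithinAt
    exact (continuous_id.sub continuous_const).div_const _
  have h2 : ContinuousWithinAt (f ∘ fun x : ℝ => (x - s) / g s) (Set.Ici s) s :=
    ContinuousWithinAt.comp (by simpa using hrc0) h1 hmap
  have h3 : ContinuousWithinAt (fun x : ℝ => f s + f ((x - s) / g s)) (Set.Ici s) s :=
    continuousWithinAt_const.add h2
  refine h3.congr ?_ ?_
  · intro x hx
    simp only [Set.mem_Ici] at hx
    have ht : (0:ℝ) ≤ (x - s) / g s := div_nonneg (by linarith) hgs.le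
    have := heq s ((x - s) / g s) hs ht
    rw [mul_div_cancel₀ _ hgs.ne'] at this
    rw [show s + (x - s) = x by ring] at this
    rw [this]
  · simp [hf0]
end

section
/- Let f : [0,∞) → ℝ be non-zero and g : [0,∞) → [0,∞) satisfy f(s + g(s)·t) = f(s) + f(t) for all s,t ≥ 0. If f is right continuous on [0,∞), then g(s) ≥ 1 for every s ≥ 0. -/
/-- right continuity of f forces g ≥ 1 on [0,∞). -/
theorem stmt9 (f : ℝ → ℝ) (g : ℝ → ℝ)
    (hgnn : ∀ s : ℝ, 0 ≤ s → 0 ≤ g s)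
    (heq : ∀ s t : ℝ, 0 ≤ s → 0 ≤ t → f (s + g s * t) = f s + f t)
    (hfnz : ∃ s : ℝ, 0 ≤ s ∧ f s ≠ 0)
    (hrc : ∀ s : ℝ, 0 ≤ s → ContinuousWithinAt f (Set.Ici s) s) :
    ∀ s : ℝ, 0 ≤ s → 1 ≤ g s := by
  have hA : ∀ u : ℝ, 0 ≤ u → g u = 0 → ∀ t, 0 ≤ t → f t = 0 := by
    intro u hu hgu t ht
    have := heq u t hu ht
    rw [hgu] at this
    simp at this
    linarith
  have hf0 : f 0 = 0 := by
    have := heq 0 0 le_rfl le_rfl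
    simp at this
    linarith
  intro s hs
  by_contra hlt
  push_neg at hlt
  obtain ⟨s₀, hs₀, hfs₀⟩ := hfnz
  have hfzero : ∀ t, 0 ≤ t → f t = 0 := by
    set c := g s with hc
    have hcnn : (0:ℝ) ≤ c := hgnn s hs
    rcases eq_or_lt_of_le hcnn with h0 | hcpos
    · exact hA s hs h0.symm
    · set T := s / (1 - c) with hT
      have h1c : (0:ℝ) < 1 - c := by linarith
      have hTnn : 0 ≤ T := div_nonneg hs h1c.le
      have hsT : s + c * T = T := by
        rw [hT]; field_simp; ring
      have hfs : f s = 0 := by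
        have h := heq s T hs hTnn
        rw [hsT] at h
        linarith
      have hkey : ∀ t, 0 ≤ t → f (s + c * t) = f t := by
        intro t ht
        rw [heq s t hs ht, hfs]; ring
      have hconst : ∀ t, T ≤ t → f t = f T := by
        intro t ht
        have hseq : ∀ n : ℕ, f (T + c ^ n * (t - T)) = f t := by
          intro n
          induction n with
          | zero => simp
          | succ n ih =>
            have hnn : 0 ≤ T + c ^ n * (t - T) := by
              have : 0 ≤ c ^ n * (t - T) :=
                mul_nonneg (pow_nonneg hcnn n) (sub_nonneg.2 ht)
              linarith
            have harg : s + c * (T + c ^ n * (t - T)) = T + c ^ (n+1) * (t - T) := by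
              linear_combination hsT
            calc f (T + c ^ (n+1) * (t - T)) = f (s + c * (T + c ^ n * (t - T))) := by
                  rw [harg]
              _ = f (T + c ^ n * (t - T)) := hkey _ hnn
              _ = f t := ih
        have hx : Filter.Tendsto (fun n : ℕ => T + c ^ n * (t - T))
            Filter.atTop (nhds T) := by
          have h1 : Filter.Tendsto (fun n : ℕ => (c : ℝ) ^ n) Filter.atTop (nhds 0) :=
            tendsto_pow_atTop_nhds_zero_of_lt_one hcnn hlt
          have h2 := (h1.mul_const (t - T)).const_add T
          simpa using h2
        have hx' : Filter.Tendsto (fun n : ℕ => T + c ^ n * (t - T))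
            Filter.atTop (nhdsWithin T (Set.Ici T)) := by
          refine tendsto_nhdsWithin_of_tendsto_nhds_of_eventually_within _ hx
            (Filter.Eventually.of_forall fun n => ?_)
          have : 0 ≤ c ^ n * (t - T) :=
            mul_nonneg (pow_nonneg hcnn n) (sub_nonneg.2 ht)
          simp only [Set.mem_Ici]; linarith
        have hcomp := ((hrc T hTnn).tendsto).comp hx'
        have hconst' : Filter.Tendsto (fun _ : ℕ => f t) Filter.atTop (nhds (f T)) := by
          refine hcomp.congr fun n => ?_
          exact hseq n
        exact (tendsto_nhds_unique hconst' tendsto_const_nhds).symm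
      rcases eq_or_lt_of_le (hgnn T hTnn) with hgT0 | hgTpos
      · exact hA T hTnn hgT0.symm
      · intro t ht
        rcases eq_or_lt_of_le ht with h | hpos
        · rw [← h]; exact hf0
        · have h1 : f (T + g T * t) = f T + f t := heq T t hTnn ht
          have h2 : T ≤ T + g T * t := by nlinarith
          have h3 : f (T + g T * t) = f T := hconst _ h2
          linarith
  exact hfs₀ (hfzero s₀ hs₀)
end

section
/- Let f : [0,∞) → ℝ be non-zero and g : [0,∞) → [0,∞) satisfy f(s + g(s)·t) = f(s) + f(t) for all s,t ≥ 0. If f is right continuous on [0,∞), then f is continuous on [0,∞). -/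
open Filter Set Topology

/-- right continuity of f on [0,∞) implies continuity on [0,∞). -/
theorem stmt10 (f : ℝ → ℝ) (g : ℝ → ℝ)
    (hgnn : ∀ s : ℝ, 0 ≤ s → 0 ≤ g s)
    (heq : ∀ s t : ℝ, 0 ≤ s → 0 ≤ t → f (s + g s * t) = f s + f t)
    (hfnz : ∃ s : ℝ, 0 ≤ s ∧ f s ≠ 0)
    (hrc : ∀ s : ℝ, 0 ≤ s → ContinuousWithinAt f (Set.Ici s) s) :
    ContinuousOn f (Set.Ici 0) := by
  obtain ⟨s₀, hs₀0, hfs₀⟩ := hfnz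
  have h0 : f 0 = 0 := by
    have h := heq 0 0 le_rfl le_rfl
    simp only [mul_zero, add_zero] at h
    linarith
  have hgpos : ∀ s, 0 ≤ s → 0 < g s := by
    intro s hs
    rcases (hgnn s hs).lt_or_eq with h | h
    · exact h
    · exfalso
      have h2 := heq s s₀ hs hs₀0
      rw [← h] at h2
      simp only [zero_mul, add_zero] at h2
      exact hfs₀ (by linarith)
  have hg1 : ∀ t, 0 ≤ t → 1 ≤ g t := by
    intro t ht
    by_contra hlt
    push_neg at hlt
    have hp : 0 < g t := hgpos t ht
    have h1g : 0 < 1 - g t := by linarith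
    set c := t / (1 - g t) with hc_def
    have hc : 0 ≤ c := div_nonneg ht h1g.le
    have hfix : t + g t * c = c := by
      rw [hc_def]
      field_simp
      ring
    have hconv : ∀ u, c ≤ u →
        Tendsto (fun n : ℕ => f u + n * f t) atTop (𝓝 (f c)) := by
      intro u hu
      have hnn : ∀ n : ℕ, c ≤ c + (g t) ^ n * (u - c) := by
        intro n
        have : 0 ≤ (g t) ^ n * (u - c) :=
          mul_nonneg (pow_nonneg hp.le n) (by linarith)
        linarith
      have hfa : ∀ n : ℕ, f (c + (g t) ^ n * (u - c)) = f u + n * f t := by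
        intro n
        induction n with
        | zero => simp
        | succ n ih =>
          have harg : c + (g t) ^ (n + 1) * (u - c)
              = t + g t * (c + (g t) ^ n * (u - c)) := by
            have : t + g t * c = c := hfix
            nlinarith [pow_succ (g t) n]
          rw [harg, heq t _ ht (le_trans hc (hnn n)), ih]
          push_cast
          ring
      have hta : Tendsto (fun n : ℕ => c + (g t) ^ n * (u - c)) atTop (𝓝 c) := by
        have h1 := (tendsto_pow_atTop_nhds_zero_of_lt_one hp.le hlt).mul_const (u - c)
        simpa using tendsto_const_nhds.add h1
      have hta' : Tendsto (fun n : ℕ => c + (g t) ^ n * (u - c)) atTop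
          (𝓝[Set.Ici c] c) :=
        tendsto_nhdsWithin_iff.mpr ⟨hta, Eventually.of_forall hnn⟩
      have hcomp := Filter.Tendsto.comp (hrc c hc) hta'
      exact hcomp.congr hfa
    have hft : f t = 0 := by
      have h1 := hconv c le_rfl
      have h2 := h1.comp (tendsto_add_atTop_nat 1)
      have h3 := h2.sub h1
      have h4 : Tendsto (fun _ : ℕ => f t) atTop (𝓝 (f c - f c)) := by
        refine h3.congr fun n => ?_
        simp only [Function.comp_apply]
        push_cast
        ring
      have h5 := tendsto_nhds_unique h4 tendsto_const_nhds
      linarith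
    have hfconst : ∀ u, c ≤ u → f u = f c := by
      intro u hu
      have h1 : Tendsto (fun _ : ℕ => f u) atTop (𝓝 (f c)) := by
        simpa [hft] using hconv u hu
      exact (tendsto_nhds_unique h1 tendsto_const_nhds).symm
    have hfc0 : f c = 0 := by
      have h1 := heq c c hc hc
      have h2 : c ≤ c + g c * c := by
        nlinarith [hgpos c hc]
      rw [hfconst _ h2] at h1
      linarith
    have hall : ∀ a, 0 ≤ a → f a = 0 := by
      intro a ha
      have hga := hgpos a ha
      set T := max c (c / g a) with hT
      have hTc : c ≤ T := le_max_left _ _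
      have hT0 : 0 ≤ T := le_trans hc hTc
      have harg : c ≤ a + g a * T := by
        have h1 : c / g a ≤ T := le_max_right _ _
        rw [div_le_iff₀ hga] at h1
        nlinarith
      have h3 := heq a T ha hT0
      rw [hfconst _ harg, hfconst _ hTc, hfc0] at h3
      linarith
    exact hfs₀ (hall s₀ hs₀0)
  -- main continuity proof
  intro x hx
  have hR : ContinuousWithinAt f (Set.Ici x) x := hrc x hx
  have hL : ContinuousWithinAt f (Set.Ici 0 ∩ Set.Iic x) x := by
    have hmem : ∀ᶠ y in 𝓝[Set.Ici 0 ∩ Set.Iic x] x,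
        y ∈ Set.Ici 0 ∩ Set.Iic x := eventually_mem_nhdsWithin
    have hφ0 : ∀ y ∈ Set.Ici 0 ∩ Set.Iic x, 0 ≤ (x - y) / g y := by
      intro y hy
      exact div_nonneg (by linarith [Set.mem_Iic.mp hy.2]) (hgpos y hy.1).le
    have hφle : ∀ y ∈ Set.Ici 0 ∩ Set.Iic x, (x - y) / g y ≤ x - y := by
      intro y hy
      exact div_le_self (by linarith [Set.mem_Iic.mp hy.2]) (hg1 y hy.1)
    have htends : Tendsto (fun y : ℝ => x - y) (𝓝[Set.Ici 0 ∩ Set.Iic x] x) (𝓝 0) := by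
      have h1 : Tendsto (fun y : ℝ => x - y) (𝓝 x) (𝓝 (x - x)) :=
        (continuous_const.sub continuous_id).tendsto x
      simpa using h1.mono_left nhdsWithin_le_nhds
    have h1 : Tendsto (fun y => (x - y) / g y) (𝓝[Set.Ici 0 ∩ Set.Iic x] x) (𝓝 0) :=
      squeeze_zero' (hmem.mono hφ0) (hmem.mono hφle) htends
    have h2 : Tendsto (fun y => (x - y) / g y) (𝓝[Set.Ici 0 ∩ Set.Iic x] x)
        (𝓝[Set.Ici 0] 0) :=
      tendsto_nhdsWithin_iff.mpr ⟨h1, hmem.mono hφ0⟩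
    have h3 : Tendsto (fun y => f ((x - y) / g y)) (𝓝[Set.Ici 0 ∩ Set.Iic x] x)
        (𝓝 (f 0)) := Filter.Tendsto.comp (hrc 0 le_rfl) h2
    have h4 : Tendsto (fun y => f x - f ((x - y) / g y))
        (𝓝[Set.Ici 0 ∩ Set.Iic x] x) (𝓝 (f x)) := by
      simpa [h0] using tendsto_const_nhds.sub h3
    have heqf : ∀ᶠ y in 𝓝[Set.Ici 0 ∩ Set.Iic x] x,
        f x - f ((x - y) / g y) = f y := by
      refine hmem.mono fun y hy => ?_
      have h5 := heq y ((x - y) / g y) hy.1 (hφ0 y hy)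
      have h6 : y + g y * ((x - y) / g y) = x := by
        rw [mul_div_assoc', mul_div_cancel_left₀ _ (hgpos y hy.1).ne']
        ring
      rw [h6] at h5
      linarith
    exact h4.congr' heqf
  have hU := hL.union hR
  refine hU.mono fun y hy => ?_
  rcases le_total y x with h | h
  · exact Or.inl ⟨hy, h⟩
  · exact Or.inr h
end

section
/- Let f : [0,∞) → ℝ be non-zero and g : [0,∞) → [0,∞) satisfy f(s + g(s)·t) = f(s) + f(t) for all s,t ≥ 0. If f is right continuous at some point of [0,∞), then f is continuous on [0,∞). -/
/-- right continuity of f at some point implies continuity on [0,∞). -/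
theorem stmt11 (f : ℝ → ℝ) (g : ℝ → ℝ)
    (hgnn : ∀ s : ℝ, 0 ≤ s → 0 ≤ g s)
    (heq : ∀ s t : ℝ, 0 ≤ s → 0 ≤ t → f (s + g s * t) = f s + f t)
    (hfnz : ∃ s : ℝ, 0 ≤ s ∧ f s ≠ 0)
    (hrc : ∃ s : ℝ, 0 ≤ s ∧ ContinuousWithinAt f (Set.Ici s) s) :
    ContinuousOn f (Set.Ici 0) := by
  obtain ⟨s₀, hs₀, hrc₀⟩ := hrc
  have hf0 : f 0 = 0 := by
    have h := heq 0 0 le_rfl le_rfl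
    simp at h
    linarith
  have hgpos : ∀ s, 0 ≤ s → 0 < g s := by
    intro s hs
    rcases (hgnn s hs).lt_or_eq with h | h
    · exact h
    · exfalso
      obtain ⟨u, hu, hfu⟩ := hfnz
      have h2 := heq s u hs hu
      rw [← h, zero_mul, add_zero] at h2
      apply hfu
      linarith
  have key : ∀ s y : ℝ, 0 ≤ s → s ≤ y → f y = f s + f ((y - s) / g s) := by
    intro s y hs hsy
    have hg := hgpos s hs
    have ht : (0:ℝ) ≤ (y - s) / g s := div_nonneg (by linarith) hg.le
    have h := heq s ((y - s) / g s) hs ht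
    rwa [mul_div_cancel₀ _ hg.ne', add_sub_cancel] at h
  -- right continuity at 0
  have hrc0 : ContinuousWithinAt f (Set.Ici 0) 0 := by
    rw [ContinuousWithinAt, hf0]
    have hk : Filter.Tendsto (fun u : ℝ => s₀ + g s₀ * u) (nhdsWithin 0 (Set.Ici 0))
        (nhdsWithin s₀ (Set.Ici s₀)) := by
      apply tendsto_nhdsWithin_of_tendsto_nhds_of_eventually_within
      · have hcont : Continuous fun u : ℝ => s₀ + g s₀ * u := by continuity
        have hc := hcont.tendsto 0
        simp only [mul_zero, add_zero] at hc
        exact hc.mono_left nhdsWithin_le_nhds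
      · filter_upwards [self_mem_nhdsWithin] with u hu
        have : (0:ℝ) ≤ g s₀ * u := mul_nonneg (hgnn s₀ hs₀) hu
        simp only [Set.mem_Ici]
        linarith
    have hcomp := (hrc₀.tendsto).comp hk
    have h2 : Filter.Tendsto (fun u : ℝ => f (s₀ + g s₀ * u) - f s₀)
        (nhdsWithin 0 (Set.Ici 0)) (nhds 0) := by
      simpa using hcomp.sub_const (f s₀)
    apply h2.congr'
    filter_upwards [self_mem_nhdsWithin] with u hu
    have := heq s₀ u hs₀ hu
    linarith
  -- right continuity everywhere
  have hrcAll : ∀ s, 0 ≤ s → ContinuousWithinAt f (Set.Ici s) s := by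
    intro s hs
    rw [ContinuousWithinAt]
    have hk : Filter.Tendsto (fun x : ℝ => (x - s) / g s) (nhdsWithin s (Set.Ici s))
        (nhdsWithin 0 (Set.Ici 0)) := by
      apply tendsto_nhdsWithin_of_tendsto_nhds_of_eventually_within
      · have hcont : Continuous fun x : ℝ => (x - s) / g s := by continuity
        have hc := hcont.tendsto s
        simp only [sub_self, zero_div] at hc
        exact hc.mono_left nhdsWithin_le_nhds
      · filter_upwards [self_mem_nhdsWithin] with x hx
        exact div_nonneg (by simp at hx; linarith) (hgpos s hs).le
    have hcomp := hrc0.tendsto.comp hk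
    rw [hf0] at hcomp
    have h2 : Filter.Tendsto (fun x : ℝ => f s + f ((x - s) / g s))
        (nhdsWithin s (Set.Ici s)) (nhds (f s)) := by
      simpa using hcomp.const_add (f s)
    apply h2.congr'
    filter_upwards [self_mem_nhdsWithin] with x hx
    exact (key s x hs hx).symm
  -- g ≥ 1
  have hg1 : ∀ t, 0 ≤ t → 1 ≤ g t := by
    intro t ht
    by_contra hlt
    push_neg at hlt
    set c := g t with hc
    have hc0 : 0 < c := hgpos t ht
    have h1c : 0 < 1 - c := by linarith
    set L := t / (1 - c) with hLdef
    have hLt : t ≤ L := by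
      rw [hLdef, le_div_iff₀ h1c]
      nlinarith
    have hL0 : (0:ℝ) ≤ L := le_trans ht hLt
    have hLc : L - t = c * L := by
      rw [hLdef]
      field_simp
      ring
    have hft : f t = 0 := by
      have h := key t L ht hLt
      rw [hLc, mul_div_cancel_left₀ _ hc0.ne'] at h
      linarith
    have hconst : ∀ s, L ≤ s → f s = f L := by
      intro s hsL
      have horb : ∀ n : ℕ, f (c ^ n * (s - L) + L) = f s := by
        intro n
        induction n with
        | zero => simp
        | succ n ih =>
          have hx : (0:ℝ) ≤ c ^ n * (s - L) + L := by
            have := mul_nonneg (pow_nonneg hc0.le n) (by linarith : (0:ℝ) ≤ s - L)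
            linarith
          have h := heq t (c ^ n * (s - L) + L) ht hx
          rw [hft, zero_add] at h
          have harg : t + c * (c ^ n * (s - L) + L) = c ^ (n + 1) * (s - L) + L := by
            have ht' : t = L - c * L := by linarith
            rw [ht']
            ring
          rw [harg] at h
          rw [h, ih]
      have hxlim : Filter.Tendsto (fun n : ℕ => c ^ n * (s - L) + L) Filter.atTop
          (nhdsWithin L (Set.Ici L)) := by
        apply tendsto_nhdsWithin_of_tendsto_nhds_of_eventually_within
        · have hpow : Filter.Tendsto (fun n : ℕ => c ^ n) Filter.atTop (nhds 0) :=
            tendsto_pow_atTop_nhds_zero_of_lt_one hc0.le hlt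
          have := (hpow.mul_const (s - L)).add_const L
          simpa using this
        · apply Filter.Eventually.of_forall
          intro n
          have := mul_nonneg (pow_nonneg hc0.le n) (by linarith : (0:ℝ) ≤ s - L)
          simp only [Set.mem_Ici]
          linarith
      have hcomp := (hrcAll L hL0).tendsto.comp hxlim
      have hconst2 : Filter.Tendsto (fun _ : ℕ => f s) Filter.atTop (nhds (f L)) :=
        hcomp.congr (fun n => horb n)
      exact tendsto_nhds_unique tendsto_const_nhds hconst2
    obtain ⟨u, hu, hfu⟩ := hfnz
    apply hfu
    have hgL := hgpos L hL0
    have h1 := heq L u hL0 hu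
    have h2 : L ≤ L + g L * u := by nlinarith
    rw [hconst _ h2] at h1
    linarith
  -- conclude
  intro y hy
  have hIci : ContinuousWithinAt f (Set.Ici y) y := hrcAll y hy
  have hIcc : ContinuousWithinAt f (Set.Icc 0 y) y := by
    rw [ContinuousWithinAt]
    have hh : Filter.Tendsto (fun s : ℝ => (y - s) / g s) (nhdsWithin y (Set.Icc 0 y))
        (nhdsWithin 0 (Set.Ici 0)) := by
      apply tendsto_nhdsWithin_of_tendsto_nhds_of_eventually_within
      · have htend : Filter.Tendsto (fun s : ℝ => y - s) (nhdsWithin y (Set.Icc 0 y)) (nhds 0) := by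
          have hcont : Continuous fun s : ℝ => y - s := by continuity
          have hc := hcont.tendsto y
          simp only [sub_self] at hc
          exact hc.mono_left nhdsWithin_le_nhds
        apply squeeze_zero' _ _ htend
        · filter_upwards [self_mem_nhdsWithin] with s hs
          exact div_nonneg (by linarith [hs.2]) (hgpos s hs.1).le
        · filter_upwards [self_mem_nhdsWithin] with s hs
          have h1 : (0:ℝ) ≤ y - s := by linarith [hs.2]
          have h2 := mul_le_mul_of_nonneg_left (hg1 s hs.1) h1
          rw [div_le_iff₀ (hgpos s hs.1)]
          linarith
      · filter_upwards [self_mem_nhdsWithin] with s hs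
        exact div_nonneg (by linarith [hs.2]) (hgpos s hs.1).le
    have hcomp := hrc0.tendsto.comp hh
    rw [hf0] at hcomp
    have h2 : Filter.Tendsto (fun s : ℝ => f y - f ((y - s) / g s))
        (nhdsWithin y (Set.Icc 0 y)) (nhds (f y)) := by
      simpa using tendsto_const_nhds.sub hcomp
    apply h2.congr'
    filter_upwards [self_mem_nhdsWithin] with s hs
    have := key s y hs.1 hs.2
    linarith
  have hunion := hIcc.union hIci
  apply hunion.mono
  intro x hx
  rcases le_or_gt x y with h | h
  · exact Or.inl ⟨hx, h⟩
  · exact Or.inr h.le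
end

section
/- Let f : [0,∞) → ℝ be non-zero, continuous, and g : [0,∞) → [0,∞) satisfy f(s + g(s)·t) = f(s) + f(t) for all s,t ≥ 0. Then f is monotone (either non-decreasing on [0,∞) or non-increasing on [0,∞)). -/
/-!
Setting `t = (b - a) / g a` gives `f b = f a + f ((b - a) / g a)` for `a ≤ b`, so `f` is monotone as
soon as it has constant sign. If it takes both signs, it has a zero `r > 0` (intermediate value
theorem), and then `f (r + g r * t) = f t`. Under the affine map `t ↦ r + g r * t`, either every
orbit contracts to the fixed point (`g r < 1`, so `f` is constant) or every `x ≥ 0` is pulled back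
into `[0, r]` (`g r ≥ 1`); in both cases `f` is bounded above. But the values of `f` are closed
under adding a positive value `f p`, since `f (x + g x * p) = f x + f p`.
-/

open Set Filter Topology

theorem map_zero_of_funEq {f g : ℝ → ℝ}
    (heq : ∀ s t : ℝ, 0 ≤ s → 0 ≤ t → f (s + g s * t) = f s + f t) : f 0 = 0 := by
  have h := heq 0 0 le_rfl le_rfl
  simp only [mul_zero, add_zero] at h
  linarith

theorem pos_of_funEq {f g : ℝ → ℝ} (hgnn : ∀ s : ℝ, 0 ≤ s → 0 ≤ g s)
    (heq : ∀ s t : ℝ, 0 ≤ s → 0 ≤ t → f (s + g s * t) = f s + f t)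
    (hfnz : ∃ s : ℝ, 0 ≤ s ∧ f s ≠ 0) {s : ℝ} (hs : 0 ≤ s) : 0 < g s := by
  refine (hgnn s hs).lt_of_ne fun hgs => ?_
  obtain ⟨a, ha, hfa⟩ := hfnz
  have h := heq s a hs ha
  rw [← hgs, zero_mul, add_zero] at h
  exact hfa (by linarith)

theorem apply_eq_add_of_le {f g : ℝ → ℝ} (hg : ∀ s : ℝ, 0 ≤ s → 0 < g s)
    (heq : ∀ s t : ℝ, 0 ≤ s → 0 ≤ t → f (s + g s * t) = f s + f t)
    {a b : ℝ} (ha : 0 ≤ a) (hab : a ≤ b) : f b = f a + f ((b - a) / g a) := by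
  have hb : a + g a * ((b - a) / g a) = b := by
    field_simp [(hg a ha).ne']
    ring
  rw [← heq a _ ha (div_nonneg (by linarith) (hg a ha).le), hb]

theorem monotoneOn_of_funEq_of_nonneg {f g : ℝ → ℝ} (hg : ∀ s : ℝ, 0 ≤ s → 0 < g s)
    (heq : ∀ s t : ℝ, 0 ≤ s → 0 ≤ t → f (s + g s * t) = f s + f t)
    (hf : ∀ x : ℝ, 0 ≤ x → 0 ≤ f x) : MonotoneOn f (Ici 0) := by
  intro a ha b _ hab
  rw [apply_eq_add_of_le hg heq ha hab]
  linarith [hf _ (div_nonneg (sub_nonneg.mpr hab) (hg a ha).le)]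

theorem antitoneOn_of_funEq_of_nonpos {f g : ℝ → ℝ} (hg : ∀ s : ℝ, 0 ≤ s → 0 < g s)
    (heq : ∀ s t : ℝ, 0 ≤ s → 0 ≤ t → f (s + g s * t) = f s + f t)
    (hf : ∀ x : ℝ, 0 ≤ x → f x ≤ 0) : AntitoneOn f (Ici 0) := by
  intro a ha b _ hab
  rw [apply_eq_add_of_le hg heq ha hab]
  linarith [hf _ (div_nonneg (sub_nonneg.mpr hab) (hg a ha).le)]

theorem exists_pos_apply_eq_zero {f : ℝ → ℝ} (hf : ContinuousOn f (Ici 0)) (hf0 : f 0 = 0)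
    {p q : ℝ} (hp : 0 ≤ p) (hq : 0 ≤ q) (hfp : 0 < f p) (hfq : f q < 0) :
    ∃ r, 0 < r ∧ f r = 0 := by
  have hp' : 0 < p := hp.lt_of_ne (by rintro rfl; linarith)
  have hq' : 0 < q := hq.lt_of_ne (by rintro rfl; linarith)
  have hsub : uIcc p q ⊆ Ici 0 := fun x hx => (le_min hp hq).trans hx.1
  obtain ⟨r, hr, hfr⟩ :=
    intermediate_value_uIcc (hf.mono hsub) (mem_uIcc.mpr (Or.inr ⟨hfq.le, hfp.le⟩))
  exact ⟨r, (lt_min hp' hq').trans_le hr.1, hfr⟩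

theorem eq_of_comp_affine_of_lt_one {f : ℝ → ℝ} {r c : ℝ} (hr : 0 ≤ r) (hc₀ : 0 ≤ c)
    (hc₁ : c < 1) (hf : ContinuousWithinAt f (Ici 0) (r / (1 - c)))
    (h : ∀ t : ℝ, 0 ≤ t → f (r + c * t) = f t) {x : ℝ} (hx : 0 ≤ x) :
    f x = f (r / (1 - c)) := by
  set P := r / (1 - c)
  have hP : r + c * P = P := by
    simp only [P]
    field_simp [(sub_pos.mpr hc₁).ne']
    ring
  set a : ℕ → ℝ := fun n => (1 - c ^ n) * P + c ^ n * x
  have ha_nonneg (n : ℕ) : 0 ≤ a n := by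
    have : 0 ≤ 1 - c ^ n := sub_nonneg.mpr (pow_le_one₀ hc₀ hc₁.le)
    have : 0 ≤ P := div_nonneg hr (sub_pos.mpr hc₁).le
    positivity
  have hfa (n : ℕ) : f (a n) = f x := by
    induction n with
    | zero => simp [a]
    | succ n ih =>
      have : a (n + 1) = r + c * a n := by
        simp only [a]
        linear_combination -hP
      rw [this, h _ (ha_nonneg n), ih]
  have ha_lim : Tendsto a atTop (𝓝 P) := by
    have hpow := tendsto_pow_atTop_nhds_zero_of_lt_one hc₀ hc₁
    simpa using ((tendsto_const_nhds (x := (1 : ℝ)).sub hpow).mul_const P).add (hpow.mul_const x)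
  have hfa_lim : Tendsto (f ∘ a) atTop (𝓝 (f P)) :=
    hf.tendsto.comp (tendsto_nhdsWithin_iff.mpr ⟨ha_lim, Eventually.of_forall ha_nonneg⟩)
  exact tendsto_nhds_unique (by simp [Function.comp_def, hfa]) hfa_lim

theorem mem_image_Icc_of_comp_affine_of_one_le {f : ℝ → ℝ} {r c : ℝ} (hr : 0 < r) (hc : 1 ≤ c)
    (h : ∀ t : ℝ, 0 ≤ t → f (r + c * t) = f t) {x : ℝ} (hx : 0 ≤ x) :
    f x ∈ f '' Icc 0 r := by
  suffices ∀ n : ℕ, ∀ x, 0 ≤ x → x ≤ n * r → f x ∈ f '' Icc 0 r by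
    obtain ⟨n, hn⟩ := exists_nat_ge (x / r)
    exact this n x hx ((div_le_iff₀ hr).mp hn)
  intro n
  induction n with
  | zero =>
    intro x hx hxn
    exact ⟨x, ⟨hx, by simp only [CharP.cast_eq_zero, zero_mul] at hxn; linarith⟩, rfl⟩
  | succ n ih =>
    intro x hx hxn
    rcases le_or_gt x r with hxr | hxr
    · exact ⟨x, ⟨hx, hxr⟩, rfl⟩
    -- pull `x` back along `t ↦ r + c * t`, which moves it down by at least `r`
    set y := (x - r) / c
    have hy : 0 ≤ y := div_nonneg (by linarith) (by linarith)
    have hxy : r + c * y = x := by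
      simp only [y]
      field_simp [(zero_lt_one.trans_le hc).ne']
      ring
    rw [← hxy, h y hy]
    have : y ≤ x - r := div_le_self (by linarith) hc
    exact ih y hy (by push_cast at hxn; linarith)

theorem bddAbove_image_Ici_of_comp_affine {f : ℝ → ℝ} {r c : ℝ} (hf : ContinuousOn f (Ici 0))
    (hr : 0 < r) (hc : 0 ≤ c) (h : ∀ t : ℝ, 0 ≤ t → f (r + c * t) = f t) :
    BddAbove (f '' Ici 0) := by
  rcases lt_or_ge c 1 with hc₁ | hc₁
  · have hP : r / (1 - c) ∈ Ici 0 := div_nonneg hr.le (sub_pos.mpr hc₁).le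
    refine ⟨f (r / (1 - c)), ?_⟩
    rintro _ ⟨x, hx, rfl⟩
    exact (eq_of_comp_affine_of_lt_one hr.le hc hc₁ (hf _ hP) h hx).le
  · have hcpt : IsCompact (f '' Icc 0 r) :=
      isCompact_Icc.image_of_continuousOn (hf.mono fun _ hx => hx.1)
    refine hcpt.bddAbove.mono ?_
    rintro _ ⟨x, hx, rfl⟩
    exact mem_image_Icc_of_comp_affine_of_one_le hr hc₁ h hx

theorem not_bddAbove_image_Ici_of_funEq {f g : ℝ → ℝ} (hgnn : ∀ s : ℝ, 0 ≤ s → 0 ≤ g s)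
    (heq : ∀ s t : ℝ, 0 ≤ s → 0 ≤ t → f (s + g s * t) = f s + f t)
    {p : ℝ} (hp : 0 ≤ p) (hfp : 0 < f p) : ¬BddAbove (f '' Ici 0) := by
  have hmul (n : ℕ) : (n + 1) * f p ∈ f '' Ici 0 := by
    induction n with
    | zero => exact ⟨p, hp, by simp⟩
    | succ n ih =>
      obtain ⟨x, hx, hfx⟩ := ih
      refine ⟨x + g x * p, add_nonneg hx (mul_nonneg (hgnn x hx) hp), ?_⟩
      rw [heq x p hx hp, hfx]
      push_cast
      ring
  rintro ⟨M, hM⟩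
  obtain ⟨n, hn⟩ := exists_nat_gt (M / f p)
  have := hM (hmul n)
  rw [div_lt_iff₀ hfp] at hn
  nlinarith

/-- a non-zero continuous solution f is monotone on [0,∞). -/
theorem stmt12 (f : ℝ → ℝ) (g : ℝ → ℝ)
    (hgnn : ∀ s : ℝ, 0 ≤ s → 0 ≤ g s)
    (heq : ∀ s t : ℝ, 0 ≤ s → 0 ≤ t → f (s + g s * t) = f s + f t)
    (hfnz : ∃ s : ℝ, 0 ≤ s ∧ f s ≠ 0)
    (hcont : ContinuousOn f (Set.Ici 0)) :
    MonotoneOn f (Set.Ici 0) ∨ AntitoneOn f (Set.Ici 0) := by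
  have hg : ∀ s : ℝ, 0 ≤ s → 0 < g s := fun s hs => pos_of_funEq hgnn heq hfnz hs
  by_cases hnonneg : ∀ x : ℝ, 0 ≤ x → 0 ≤ f x
  · exact Or.inl (monotoneOn_of_funEq_of_nonneg hg heq hnonneg)
  by_cases hnonpos : ∀ x : ℝ, 0 ≤ x → f x ≤ 0
  · exact Or.inr (antitoneOn_of_funEq_of_nonpos hg heq hnonpos)
  push Not at hnonneg hnonpos
  obtain ⟨q, hq, hfq⟩ := hnonneg
  obtain ⟨p, hp, hfp⟩ := hnonpos
  obtain ⟨r, hr, hfr⟩ := exists_pos_apply_eq_zero hcont (map_zero_of_funEq heq) hp hq hfp hfq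
  have hperiod : ∀ t : ℝ, 0 ≤ t → f (r + g r * t) = f t := fun t ht => by
    rw [heq r t hr.le ht, hfr, zero_add]
  exact (not_bddAbove_image_Ici_of_funEq hgnn heq hp hfp
    (bddAbove_image_Ici_of_comp_affine hcont hr (hgnn r hr.le) hperiod)).elim
end

section
/- Let f : [0,∞) → ℝ be non-zero, monotone, and g : [0,∞) → [0,∞) satisfy f(s + g(s)·t) = f(s) + f(t) for all s,t ≥ 0. Then f is injective. -/
/-!
Reduce to f monotone (replace f by -f otherwise); then f 0 = 0, f > 0 somewhere, and g > 0 on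
[0,∞). If f a = f b with a < b, then f vanishes at t₀ = (b - a)/g a > 0, so the zero set of f is
an initial interval of length M > 0, and f > 0 beyond M. For 0 ≤ s < M the equation maps zeros
to zeros, which forces g s ≤ 1 - s/M; hence s + g s * t ≤ y for suitable s < M whenever
M < y ≤ t, and f (s + g s * t) = f t squeezes f to a constant c on (M,∞). But
f (x + g x * x) = 2 f x for x > M gives c = 2c, contradicting c > 0.
-/

open Set

namespace TwistedAdditive

variable {f g : ℝ → ℝ}

theorem map_zero (heq : ∀ s t : ℝ, 0 ≤ s → 0 ≤ t → f (s + g s * t) = f s + f t) : f 0 = 0 := by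
  have h := heq 0 0 le_rfl le_rfl
  simp only [mul_zero, add_zero] at h
  linarith

theorem g_pos (hgnn : ∀ s : ℝ, 0 ≤ s → 0 ≤ g s)
    (heq : ∀ s t : ℝ, 0 ≤ s → 0 ≤ t → f (s + g s * t) = f s + f t)
    {p : ℝ} (hp : 0 ≤ p) (hfp : f p ≠ 0) {s : ℝ} (hs : 0 ≤ s) : 0 < g s := by
  refine (hgnn s hs).lt_of_ne fun hg => hfp ?_
  have h := heq s p hs hp
  rw [← hg, zero_mul, add_zero] at h
  linarith

theorem map_div_eq_zero_of_map_eq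
    (heq : ∀ s t : ℝ, 0 ≤ s → 0 ≤ t → f (s + g s * t) = f s + f t)
    {a b : ℝ} (ha : 0 ≤ a) (hab : a < b) (hga : 0 < g a) (hfab : f a = f b) :
    f ((b - a) / g a) = 0 := by
  have h := heq a ((b - a) / g a) ha (div_pos (sub_pos.2 hab) hga).le
  rw [mul_div_cancel₀ _ hga.ne', add_sub_cancel] at h
  linarith

theorem exists_zero_threshold (hmono : MonotoneOn f (Ici 0)) (hf0 : f 0 = 0)
    {t₀ p : ℝ} (ht₀ : 0 < t₀) (hft₀ : f t₀ = 0) (hp : 0 ≤ p) (hfp : 0 < f p) :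
    ∃ M, 0 < M ∧ (∀ x, 0 ≤ x → x < M → f x = 0) ∧ ∀ x, M < x → 0 < f x := by
  set Z := {x | 0 ≤ x ∧ f x = 0}
  have hZt₀ : t₀ ∈ Z := ⟨ht₀.le, hft₀⟩
  have hZbdd : BddAbove Z := ⟨p, fun x ⟨hx, hfx⟩ => by
    by_contra! hpx
    have := hmono hp (hp.trans hpx.le) hpx.le
    linarith⟩
  have hf_nonneg : ∀ x, 0 ≤ x → 0 ≤ f x := fun x hx => hf0 ▸ hmono self_mem_Ici hx hx
  refine ⟨sSup Z, ht₀.trans_le (le_csSup hZbdd hZt₀), fun x hx hxM => ?_, fun x hMx => ?_⟩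
  · obtain ⟨z, ⟨hz, hfz⟩, hxz⟩ := exists_lt_of_lt_csSup ⟨t₀, hZt₀⟩ hxM
    have := hmono hx hz hxz.le
    linarith [hf_nonneg x hx]
  · have hx : 0 ≤ x := (ht₀.le.trans (le_csSup hZbdd hZt₀)).trans hMx.le
    exact (hf_nonneg x hx).lt_of_ne fun h => (le_csSup hZbdd ⟨hx, h.symm⟩).not_gt hMx

section Threshold

variable {M : ℝ}

theorem g_mul_le_sub (heq : ∀ s t : ℝ, 0 ≤ s → 0 ≤ t → f (s + g s * t) = f s + f t)
    (hzero : ∀ x, 0 ≤ x → x < M → f x = 0) (hpos : ∀ x, M < x → 0 < f x)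
    {s : ℝ} (hs : 0 ≤ s) (hsM : s < M) : g s * M ≤ M - s := by
  by_contra! hlt
  have hgs : 0 < g s := pos_of_mul_pos_left (by linarith) (hs.trans hsM.le)
  obtain ⟨t, hst, htM⟩ := exists_between ((div_lt_iff₀ hgs).2 (by linarith) : (M - s) / g s < M)
  have ht : 0 ≤ t := (div_pos (by linarith) hgs).le.trans hst.le
  have hMt : M < s + g s * t := by
    rw [div_lt_iff₀' hgs] at hst
    linarith
  have h := heq s t hs ht
  rw [hzero s hs hsM, hzero t ht htM] at h
  linarith [hpos _ hMt]

theorem map_eq_of_lt_of_le (hgnn : ∀ s : ℝ, 0 ≤ s → 0 ≤ g s)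
    (heq : ∀ s t : ℝ, 0 ≤ s → 0 ≤ t → f (s + g s * t) = f s + f t)
    (hmono : MonotoneOn f (Ici 0)) (hM : 0 < M)
    (hzero : ∀ x, 0 ≤ x → x < M → f x = 0) (hpos : ∀ x, M < x → 0 < f x)
    {y t : ℝ} (hMy : M < y) (hyt : y ≤ t) : f y = f t := by
  have hMt : 0 < t - M := by linarith
  -- the smallest `s` for which `g s ≤ 1 - s / M` guarantees `s + g s * t ≤ y`
  set s := M * (t - y) / (t - M)
  have hs : 0 ≤ s := div_nonneg (mul_nonneg hM.le (by linarith)) hMt.le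
  have hsM : s < M := by
    rw [div_lt_iff₀ hMt]
    nlinarith
  have hs_mul : s * (t - M) = M * (t - y) := div_mul_cancel₀ _ hMt.ne'
  have hy : 0 ≤ y := hM.le.trans hMy.le
  have ht : 0 ≤ t := hy.trans hyt
  have hfx : f (s + g s * t) = f t := by
    rw [heq s t hs ht, hzero s hs hsM, zero_add]
  have hxy : s + g s * t ≤ y := by
    have hgM := g_mul_le_sub heq hzero hpos hs hsM
    have : M * (s + g s * t) ≤ M * y := by nlinarith
    exact le_of_mul_le_mul_left this hM
  have hx : 0 ≤ s + g s * t := add_nonneg hs (mul_nonneg (hgnn s hs) ht)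
  have := hmono hx hy hxy
  have := hmono hy ht hyt
  linarith

theorem not_exists_zero_threshold (hgnn : ∀ s : ℝ, 0 ≤ s → 0 ≤ g s)
    (heq : ∀ s t : ℝ, 0 ≤ s → 0 ≤ t → f (s + g s * t) = f s + f t)
    (hmono : MonotoneOn f (Ici 0)) (hM : 0 < M)
    (hzero : ∀ x, 0 ≤ x → x < M → f x = 0) (hpos : ∀ x, M < x → 0 < f x) : False := by
  have hconst : ∀ y t, M < y → M < t → f y = f t := fun y t hy ht =>
    (le_total y t).elim (map_eq_of_lt_of_le hgnn heq hmono hM hzero hpos hy)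
      fun hty => (map_eq_of_lt_of_le hgnn heq hmono hM hzero hpos ht hty).symm
  set x := M + 1
  have hMx : M < x := lt_add_one M
  have hx : 0 ≤ x := hM.le.trans hMx.le
  have hMx' : M < x + g x * x := by nlinarith [hgnn x hx]
  have h := heq x x hx hx
  rw [hconst _ x hMx' hMx] at h
  linarith [hpos x hMx]

end Threshold

theorem injOn_of_monotoneOn (hgnn : ∀ s : ℝ, 0 ≤ s → 0 ≤ g s)
    (heq : ∀ s t : ℝ, 0 ≤ s → 0 ≤ t → f (s + g s * t) = f s + f t)
    (hfnz : ∃ s : ℝ, 0 ≤ s ∧ f s ≠ 0) (hmono : MonotoneOn f (Ici 0)) :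
    InjOn f (Ici 0) := by
  have hf0 := map_zero heq
  obtain ⟨p, hp, hfp⟩ := hfnz
  have hfp_pos : 0 < f p := (hf0 ▸ hmono self_mem_Ici hp hp).lt_of_ne' hfp
  intro a ha b hb hfab
  by_contra hne
  wlog hab : a < b generalizing a b
  · exact this hb ha hfab.symm (Ne.symm hne) ((not_lt.1 hab).lt_of_ne (Ne.symm hne))
  have hga := g_pos hgnn heq hp hfp (mem_Ici.1 ha)
  obtain ⟨M, hM, hzero, hpos⟩ := exists_zero_threshold hmono hf0
    (div_pos (sub_pos.2 hab) hga) (map_div_eq_zero_of_map_eq heq ha hab hga hfab) hp hfp_pos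
  exact not_exists_zero_threshold hgnn heq hmono hM hzero hpos

end TwistedAdditive

/-- a non-zero monotone solution f is injective on [0,∞). -/
theorem stmt13 (f : ℝ → ℝ) (g : ℝ → ℝ)
    (hgnn : ∀ s : ℝ, 0 ≤ s → 0 ≤ g s)
    (heq : ∀ s t : ℝ, 0 ≤ s → 0 ≤ t → f (s + g s * t) = f s + f t)
    (hfnz : ∃ s : ℝ, 0 ≤ s ∧ f s ≠ 0)
    (hmono : MonotoneOn f (Set.Ici 0) ∨ AntitoneOn f (Set.Ici 0)) :
    Set.InjOn f (Set.Ici 0) := by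
  rcases hmono with hmono | hanti
  · exact TwistedAdditive.injOn_of_monotoneOn hgnn heq hfnz hmono
  · have hneg : InjOn (-f) (Ici 0) := TwistedAdditive.injOn_of_monotoneOn hgnn
      (fun s t hs ht => by simp only [Pi.neg_apply, heq s t hs ht, neg_add])
      (let ⟨s, hs, hfs⟩ := hfnz; ⟨s, hs, neg_ne_zero.2 hfs⟩) hanti.neg
    exact fun a ha b hb hab => hneg ha hb (congrArg Neg.neg hab)
end

section
/- Let f : [0,∞) → ℝ be non-zero, right continuous at some point, and g : [0,∞) → [0,∞) satisfy f(s + g(s)·t) = f(s) + f(t) for all s,t ≥ 0. Then either g ≡ 1 and f(s) = a·s for some a ≠ 0, or there exist α > 0 and a ≠ 0 such that g(s) = αs + 1 and f(s) = a·log(αs+1) for all s ≥ 0. -/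
/-!
Write `s ∘ t = s + g s * t`, so that `f (s ∘ t) = f s + f t`. Letting `z → 0⁺` in
`f (z + g z * t) = f z + f t` shows that `g z → 1`: any other limit value `γ` (also `0` or `∞`)
gives `f (γ t) = f t`, and then `f = 0` by right continuity at `0`.

The heart of the proof is that `f` has no positive zero. A zero `w` with `g w < 1` makes `f`
constant beyond the fixed point of `t ↦ w + g w * t`. Zeros accumulating at `0` have orbits under
these maps which become dense, so `f` vanishes everywhere. If there is a least positive zero `m`,
then `(m + (g m - 1) t) / g t` is a zero tending to `m`, hence equal to `m`; so `g` is affine near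
`0`, and `f` is `a s` or `a log (α s + 1)`, which vanishes at `m` only if `a = 0`.

Without positive zeros `f` is injective on `[0, ∞)`, so `s ∘ 1 = 1 ∘ s` gives `g s = α s + 1`.
In the coordinate `log (α s + 1)` (or `s` if `α = 0`) the equation becomes Cauchy's equation.
-/

open Filter Set Topology

theorem ContinuousWithinAt.eq_of_frequently_eq {X Y : Type*} [TopologicalSpace X]
    [TopologicalSpace Y] [T1Space Y] {f : X → Y} {s : Set X} {a : X} {c : Y}
    (hf : ContinuousWithinAt f s a) (h : ∃ᶠ x in 𝓝[s] a, f x = c) : f a = c :=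
  (hf.tendsto.frequently h).mem_of_closed isClosed_singleton

theorem eq_mul_of_additive {k : ℝ → ℝ}
    (hadd : ∀ x y : ℝ, 0 ≤ x → 0 ≤ y → k (x + y) = k x + k y)
    (hc : ContinuousWithinAt k (Ici 0) 0) {x : ℝ} (hx : 0 ≤ x) : k x = k 1 * x := by
  have h0 : k 0 = 0 := by simpa using hadd 0 0 le_rfl le_rfl
  have hpn : ∀ u : ℝ, max u 0 - max (-u) 0 = u := fun u => by
    rcases le_total u 0 with hu | hu <;> simp [hu]
  -- the odd extension `u ↦ k u⁺ - k u⁻` is additive on all of `ℝ`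
  let F : ℝ →+ ℝ := AddMonoidHom.mk' (fun u => k (max u 0) - k (max (-u) 0)) fun u v => by
    have key : max (u + v) 0 + max (-u) 0 + max (-v) 0 =
        max (-(u + v)) 0 + max u 0 + max v 0 := by linarith [hpn u, hpn v, hpn (u + v)]
    have h3 : ∀ a b c : ℝ, 0 ≤ a → 0 ≤ b → 0 ≤ c → k (a + b + c) = k a + k b + k c :=
      fun a b c ha hb hc => by rw [hadd _ _ (by positivity) hc, hadd a b ha hb]
    have := congrArg k key
    rw [h3 _ _ _ (le_max_right _ _) (le_max_right _ _) (le_max_right _ _),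
      h3 _ _ _ (le_max_right _ _) (le_max_right _ _) (le_max_right _ _)] at this
    linarith
  have hpos : ∀ φ : ℝ → ℝ, Continuous φ → φ 0 = 0 →
      Tendsto (fun u => k (max (φ u) 0)) (𝓝 0) (𝓝 0) := fun φ hφ hφ0 => by
    have hφ' : Tendsto (fun u => max (φ u) 0) (𝓝 0) (𝓝[≥] 0) := tendsto_nhdsWithin_iff.2
      ⟨by simpa [hφ0] using (hφ.max (continuous_const (y := (0 : ℝ)))).tendsto 0,
        Eventually.of_forall fun u => mem_Ici.2 (le_max_right _ _)⟩
    have := hc.tendsto.comp hφ'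
    rwa [h0] at this
  have hF : Continuous F := continuous_of_continuousAt_zero F <| by
    simpa [ContinuousAt, F, h0] using
      (hpos id continuous_id rfl).sub (hpos Neg.neg continuous_neg neg_zero)
  have := map_real_smul F hF x 1
  simpa [F, hx, h0, mul_comm] using this

theorem additive_of_eventually_additive {k : ℝ → ℝ} (h0 : k 0 = 0)
    (H : ∀ᶠ x in 𝓝[>] 0, ∀ y : ℝ, 0 ≤ y → k (x + y) = k x + k y) :
    ∀ x y : ℝ, 0 ≤ x → 0 ≤ y → k (x + y) = k x + k y := by
  obtain ⟨δ, hδ, hsub⟩ := mem_nhdsGT_iff_exists_Ioo_subset.1 H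
  have hd : δ / 2 ∈ Ioo 0 δ := ⟨by linarith [mem_Ioi.1 hδ], by linarith [mem_Ioi.1 hδ]⟩
  have step : ∀ n : ℕ, ∀ x, 0 ≤ x → x ≤ n * (δ / 2) → ∀ y, 0 ≤ y → k (x + y) = k x + k y := by
    intro n
    induction n with
    | zero =>
      intro x hx hxn y _
      rw [le_antisymm (by simpa using hxn) hx, zero_add, h0, zero_add]
    | succ n ih =>
      intro x hx hxn y hy
      rcases hx.eq_or_lt with rfl | hx
      · rw [zero_add, h0, zero_add]
      by_cases hxδ : x < δ
      · exact hsub ⟨hx, hxδ⟩ y hy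
      have hx' : 0 ≤ x - δ / 2 := by linarith
      have hxn' : x - δ / 2 ≤ n * (δ / 2) := by push_cast at hxn; linarith
      have split : ∀ u, 0 ≤ u → k (x - δ / 2 + u + δ / 2) = k (δ / 2) + k (x - δ / 2 + u) :=
        fun u hu => by rw [add_comm _ (δ / 2)]; exact hsub hd _ (by linarith)
      have e1 := split y hy
      have e2 := split 0 le_rfl
      simp only [sub_add_cancel, add_zero] at e1 e2
      rw [show x + y = x - δ / 2 + y + δ / 2 by ring, e1, ih _ hx' hxn' y hy, e2]
      ring
  intro x y hx hy
  obtain ⟨n, hn⟩ := exists_nat_ge (x / (δ / 2))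
  exact step n x hx (by rwa [div_le_iff₀ hd.1] at hn) y hy

theorem eqOn_zero_of_map_mul_eq {f : ℝ → ℝ} (hc : ContinuousWithinAt f (Ici 0) 0)
    (hf0 : f 0 = 0) {l : ℝ} (hl0 : 0 < l) (hl1 : l ≠ 1) (hfl : ∀ t, 0 ≤ t → f (l * t) = f t) :
    EqOn f 0 (Ici 0) := by
  wlog hl : l < 1 generalizing l
  · refine this (inv_pos.2 hl0) (inv_ne_one.2 hl1) (fun t ht => ?_) (inv_lt_one_of_one_lt₀ ?_)
    · simpa [hl0.ne'] using (hfl (l⁻¹ * t) (by positivity)).symm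
    · exact lt_of_le_of_ne (not_lt.1 hl) hl1.symm
  intro t (ht : 0 ≤ t)
  have hiter : ∀ n : ℕ, f (l ^ n * t) = f t := by
    intro n
    induction n with
    | zero => simp
    | succ n ih => rw [pow_succ', mul_assoc, hfl _ (by positivity), ih]
  have hpow := (tendsto_pow_atTop_nhds_zero_of_lt_one hl0.le hl).mul_const t
  have hlim : Tendsto (fun n : ℕ => l ^ n * t) atTop (𝓝[≥] 0) :=
    tendsto_nhdsWithin_iff.2 ⟨by simpa using hpow,
      Eventually.of_forall fun n => mem_Ici.2 (by positivity)⟩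
  have := (hc.tendsto.comp hlim).congr hiter
  rw [hf0] at this
  exact tendsto_nhds_unique tendsto_const_nhds this

theorem exists_zero_mem_Ioc {f : ℝ → ℝ} {w c : ℝ} (hw : 0 < w) (hc : 1 ≤ c) (hf0 : f 0 = 0)
    (hT : ∀ t, 0 ≤ t → f (w + c * t) = f t) {T : ℝ} (hT0 : 0 ≤ T) :
    ∃ u ∈ Ioc T (w + c * T), f u = 0 := by
  -- induction on `n > T / w`, pulling `T` back along `t ↦ w + c * t`
  obtain ⟨n, hn⟩ := exists_nat_gt (T / w)
  induction n generalizing T with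
  | zero => exact absurd hn (not_lt.2 (by simpa using div_nonneg hT0 hw.le))
  | succ n ih =>
    by_cases hTw : T < w
    · exact ⟨w, ⟨hTw, by nlinarith⟩, by simpa [hf0] using hT 0 le_rfl⟩
    have hc0 : 0 < c := by linarith
    have hT' : 0 ≤ (T - w) / c := div_nonneg (by linarith) hc0.le
    have hle : (T - w) / c ≤ T - w := div_le_self (by linarith) hc
    have e : w + c * ((T - w) / c) = T := by field_simp; ring
    obtain ⟨u, ⟨hu1, hu2⟩, hu⟩ := ih hT' (by
      rw [div_lt_iff₀ hw] at hn ⊢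
      push_cast at hn
      nlinarith)
    refine ⟨w + c * u, ⟨?_, ?_⟩, by rw [hT u (hT'.trans hu1.le), hu]⟩
    · nlinarith
    · nlinarith

theorem eq_of_map_affine_eq {f : ℝ → ℝ} {w b : ℝ} (hw : 0 < w) (hb0 : 0 ≤ b) (hb1 : b < 1)
    (hrc : ContinuousWithinAt f (Ici (w / (1 - b))) (w / (1 - b)))
    (hT : ∀ t, 0 ≤ t → f (w + b * t) = f t) {t : ℝ} (ht : w / (1 - b) ≤ t) :
    f t = f (w / (1 - b)) := by
  set p := w / (1 - b) with hp
  have hwp : w = p * (1 - b) := by rw [hp, div_mul_cancel₀ _ (by linarith)]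
  have hp0 : 0 < p := div_pos hw (by linarith)
  have hv0 : ∀ k : ℕ, p ≤ p + b ^ k * (t - p) := fun k =>
    le_add_of_nonneg_right (mul_nonneg (pow_nonneg hb0 k) (sub_nonneg.2 ht))
  have hv : ∀ k : ℕ, f (p + b ^ k * (t - p)) = f t := by
    intro k
    induction k with
    | zero => simp
    | succ k ih =>
      rw [← ih, ← hT _ (hp0.le.trans (hv0 k))]
      congr 1
      rw [hwp]
      ring
  have hpow := (tendsto_pow_atTop_nhds_zero_of_lt_one hb0 hb1).mul_const (t - p)
  have hlim : Tendsto (fun k : ℕ => p + b ^ k * (t - p)) atTop (𝓝[≥] p) :=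
    tendsto_nhdsWithin_iff.2 ⟨by simpa using hpow.const_add p,
      Eventually.of_forall fun k => mem_Ici.2 (hv0 k)⟩
  exact tendsto_nhds_unique (tendsto_const_nhds.congr fun k => (hv k).symm)
    (hrc.tendsto.comp hlim)

def TwistedAdditive (f g : ℝ → ℝ) : Prop :=
  ∀ s t : ℝ, 0 ≤ s → 0 ≤ t → f (s + g s * t) = f s + f t

namespace TwistedAdditive

variable {f g : ℝ → ℝ}

theorem map_zero_s14 (h : TwistedAdditive f g) : f 0 = 0 := by
  simpa using h 0 0 le_rfl le_rfl

theorem g_pos_s14 (h : TwistedAdditive f g) (hgnn : ∀ s, 0 ≤ s → 0 ≤ g s)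
    (hf : ¬EqOn f 0 (Ici 0)) : ∀ s, 0 ≤ s → 0 < g s := by
  intro s hs
  refine (hgnn s hs).lt_of_ne fun hg => hf fun t (ht : 0 ≤ t) => ?_
  simpa [← hg] using h s t hs ht

theorem continuousWithinAt_Ici_iff (h : TwistedAdditive f g) {s : ℝ} (hs : 0 ≤ s)
    (hgs : 0 < g s) : ContinuousWithinAt f (Ici s) s ↔ ContinuousWithinAt f (Ici 0) 0 := by
  constructor
  · intro hc
    have hφ : ContinuousWithinAt (fun t => s + g s * t) (Ici 0) 0 := by fun_prop
    refine ((hc.comp_of_eq hφ (fun t (ht : 0 ≤ t) => ?_) (by simp)).sub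
      (continuousWithinAt_const (b := f s))).congr (fun t ht => ?_) ?_
    · exact mem_Ici.2 (le_add_of_nonneg_right (mul_nonneg hgs.le ht))
    · simp [h s t hs ht]
    · simp [h.map_zero_s14]
  · intro hc
    have hψ : ContinuousWithinAt (fun x => (x - s) / g s) (Ici s) s := by fun_prop
    refine ((continuousWithinAt_const (b := f s)).add
      (hc.comp_of_eq hψ (fun x (hx : s ≤ x) => ?_) (by simp))).congr (fun x (hx : s ≤ x) => ?_) ?_
    · exact mem_Ici.2 (div_nonneg (sub_nonneg.2 hx) hgs.le)
    · have := h s ((x - s) / g s) hs (div_nonneg (sub_nonneg.2 hx) hgs.le)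
      rwa [mul_div_cancel₀ _ hgs.ne', add_sub_cancel] at this
    · simp [h.map_zero_s14]

theorem eq_of_tendsto (h : TwistedAdditive f g)
    (hrc : ∀ s, 0 ≤ s → ContinuousWithinAt f (Ici s) s) {α : Type*} {L : Filter α} [L.NeBot]
    {z t : α → ℝ} {t₀ x₀ : ℝ} (ht₀ : 0 ≤ t₀) (hx₀ : 0 ≤ x₀) (hz : Tendsto z L (𝓝[≥] 0))
    (ht : Tendsto t L (𝓝[≥] t₀)) (hx : Tendsto (fun a => z a + g (z a) * t a) L (𝓝[≥] x₀)) :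
    f x₀ = f t₀ := by
  have hlhs := (hrc x₀ hx₀).tendsto.comp hx
  have hrhs := ((hrc 0 le_rfl).tendsto.comp hz).add ((hrc t₀ ht₀).tendsto.comp ht)
  rw [h.map_zero_s14, zero_add] at hrhs
  refine tendsto_nhds_unique (hlhs.congr' ?_) hrhs
  filter_upwards [hz self_mem_nhdsWithin, ht self_mem_nhdsWithin] with a (ha : 0 ≤ z a)
    (hta : t₀ ≤ t a)
  exact h _ _ ha (ht₀.trans hta)

theorem map_mul_eq_of_tendsto (h : TwistedAdditive f g) (hgpos : ∀ s, 0 ≤ s → 0 < g s)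
    (hrc : ∀ s, 0 ≤ s → ContinuousWithinAt f (Ici s) s) (U : Ultrafilter ℝ)
    (hU : (U : Filter ℝ) ≤ 𝓝[≥] 0) {γ : ℝ} (hγ : 0 ≤ γ) (hg : Tendsto g U (𝓝 γ)) {t : ℝ}
    (ht : 0 ≤ t) :
    f (γ * t) = f t := by
  have hz : Tendsto id (U : Filter ℝ) (𝓝[≥] 0) := tendsto_id'.2 hU
  have hz' : Tendsto id (U : Filter ℝ) (𝓝 0) := tendsto_nhds_of_tendsto_nhdsWithin hz
  have hnn : ∀ᶠ z in (U : Filter ℝ), 0 ≤ z := hU self_mem_nhdsWithin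
  rcases U.eventually_or.1 (Eventually.of_forall fun z => le_total γ (g z)) with hge | hle
  · refine h.eq_of_tendsto hrc ht (by positivity) hz
      (tendsto_nhdsWithin_iff.2
        ⟨tendsto_const_nhds, Eventually.of_forall fun _ => mem_Ici.2 le_rfl⟩)
      (tendsto_nhdsWithin_iff.2 ⟨by simpa using hz'.add (hg.mul_const t), ?_⟩)
    filter_upwards [hnn, hge] with z hz hgz
    exact mem_Ici.2 (by simp only [id]; nlinarith)
  · -- approach `γ * t` from the right by writing it as `g z * (γ * t / g z)`
    obtain ⟨z₀, hgz₀, hz₀⟩ := (hle.and hnn).exists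
    have hγ : 0 < γ := (hgpos z₀ hz₀).trans_le hgz₀
    refine h.eq_of_tendsto hrc ht (by positivity) hz (t := fun z => γ * t / g z)
      (tendsto_nhdsWithin_iff.2 ⟨?_, ?_⟩)
      ((tendsto_nhdsWithin_iff.2 ⟨by simpa using hz'.add_const (γ * t), ?_⟩).congr' ?_)
    · have := (tendsto_const_nhds (x := γ * t)).div hg hγ.ne'
      rwa [mul_div_cancel_left₀ _ hγ.ne'] at this
    · filter_upwards [hnn, hle] with z hz hgz
      exact mem_Ici.2 ((le_div_iff₀ (hgpos z hz)).2 (by nlinarith))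
    · filter_upwards [hnn] with z hz
      exact mem_Ici.2 (by simpa using hz)
    · filter_upwards [hnn] with z hz
      simp [mul_div_cancel₀ _ (hgpos z hz).ne']

theorem eqOn_zero_of_tendsto_atTop (h : TwistedAdditive f g) (hgpos : ∀ s, 0 ≤ s → 0 < g s)
    (hrc : ∀ s, 0 ≤ s → ContinuousWithinAt f (Ici s) s) {L : Filter ℝ} [L.NeBot]
    (hL : L ≤ 𝓝[≥] 0) (hg : Tendsto g L atTop) : EqOn f 0 (Ici 0) := by
  intro s (hs : 0 ≤ s)
  have hnn : ∀ᶠ z in L, 0 ≤ z := hL self_mem_nhdsWithin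
  have hz : Tendsto id L (𝓝[≥] 0) := tendsto_id'.2 hL
  have := h.eq_of_tendsto hrc le_rfl hs hz (t := fun z => s / g z)
    (tendsto_nhdsWithin_iff.2 ⟨tendsto_const_nhds.div_atTop hg, ?_⟩)
    ((tendsto_nhdsWithin_iff.2 ⟨by simpa using (tendsto_nhds_of_tendsto_nhdsWithin hz).add_const s,
      ?_⟩).congr' ?_)
  · rw [this, h.map_zero_s14]
    rfl
  · filter_upwards [hnn] with z hz
    exact mem_Ici.2 (div_nonneg hs (hgpos z hz).le)
  · filter_upwards [hnn] with z hz
    exact mem_Ici.2 (by simpa using hz)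
  · filter_upwards [hnn] with z hz
    simp [mul_div_cancel₀ _ (hgpos z hz).ne']

theorem tendsto_g_nhdsGE_zero (h : TwistedAdditive f g) (hgpos : ∀ s, 0 ≤ s → 0 < g s)
    (hrc : ∀ s, 0 ≤ s → ContinuousWithinAt f (Ici s) s) (hf : ¬EqOn f 0 (Ici 0)) :
    Tendsto g (𝓝[≥] 0) (𝓝 1) := by
  rw [tendsto_iff_ultrafilter]
  intro U hU
  have hnn : ∀ᶠ z in (U : Filter ℝ), 0 ≤ z := hU self_mem_nhdsWithin
  by_cases hbdd : ∃ M, ∀ᶠ z in (U : Filter ℝ), g z ≤ M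
  · obtain ⟨M, hM⟩ := hbdd
    obtain ⟨γ, hγ, hgγ⟩ := isCompact_Icc.ultrafilter_le_nhds (U.map g) <| by
      rw [Ultrafilter.coe_map, le_principal_iff]
      exact (hM.and hnn).mono fun z hz => ⟨(hgpos z hz.2).le, hz.1⟩
    have hscale := fun t (ht : 0 ≤ t) => h.map_mul_eq_of_tendsto hgpos hrc U hU hγ.1 hgγ ht
    rcases hγ.1.eq_or_lt with rfl | hγpos
    · exact absurd (fun t ht => by simpa [h.map_zero_s14] using (hscale t ht).symm) hf
    obtain rfl : γ = 1 := by
      by_contra hγ1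
      exact hf (eqOn_zero_of_map_mul_eq (hrc 0 le_rfl) h.map_zero_s14 hγpos hγ1 hscale)
    exact hgγ
  · refine absurd (h.eqOn_zero_of_tendsto_atTop hgpos hrc hU (tendsto_atTop.2 fun M => ?_)) hf
    exact (Ultrafilter.eventually_not.2 fun hM => hbdd ⟨M, hM⟩).mono fun z hz => (not_le.1 hz).le

theorem eqOn_zero_of_frequently_zero (h : TwistedAdditive f g)
    (hrc : ∀ s, 0 ≤ s → ContinuousWithinAt f (Ici s) s) (hg1 : Tendsto g (𝓝[≥] 0) (𝓝 1))
    (hZ : ∃ᶠ w in 𝓝[≥] 0, 0 < w ∧ f w = 0 ∧ 1 ≤ g w) : EqOn f 0 (Ici 0) := by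
  intro T (hT : 0 ≤ T)
  refine (hrc T hT).eq_of_frequently_eq ((nhdsGE_basis_Ico T).frequently_iff.2 fun ε hε => ?_)
  have hclose : ∀ᶠ w in 𝓝[≥] 0, w + g w * T < ε := by
    have : Tendsto (fun w => w + g w * T) (𝓝[≥] 0) (𝓝 T) := by
      simpa using (tendsto_id.mono_left nhdsWithin_le_nhds).add (hg1.mul_const T)
    exact this.eventually (gt_mem_nhds hε)
  obtain ⟨w, ⟨hw, hfw, hgw⟩, hwε⟩ := (hZ.and_eventually hclose).exists
  obtain ⟨u, hu, hfu⟩ := exists_zero_mem_Ioc hw hgw h.map_zero_s14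
    (fun t ht => by simpa [hfw] using h w t hw.le ht) hT
  exact ⟨u, ⟨hu.1.le, hu.2.trans_lt hwε⟩, hfu⟩

theorem eqOn_zero_of_zero_of_g_lt_one (h : TwistedAdditive f g) (hgnn : ∀ s, 0 ≤ s → 0 ≤ g s)
    (hrc : ∀ s, 0 ≤ s → ContinuousWithinAt f (Ici s) s) {w : ℝ} (hw : 0 < w) (hfw : f w = 0)
    (hgw : g w < 1) : EqOn f 0 (Ici 0) := by
  -- `f` is constant beyond `p = w / (1 - g w)`, and `f (p + g p * t) = f p + f t`
  have hp : 0 ≤ w / (1 - g w) := div_nonneg hw.le (by linarith)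
  have hconst := fun t => eq_of_map_affine_eq hw (hgnn w hw.le) hgw (hrc _ hp)
    (fun t ht => by simpa [hfw] using h w t hw.le ht) (t := t)
  intro t (ht : 0 ≤ t)
  have := h _ t hp ht
  rw [hconst _ (le_add_of_nonneg_right (mul_nonneg (hgnn _ hp) ht))] at this
  simpa using this

theorem eq_mul_of_eventually_g_eq_one (h : TwistedAdditive f g)
    (hrc0 : ContinuousWithinAt f (Ici 0) 0) (hg : ∀ᶠ s in 𝓝[>] 0, g s = 1) {s : ℝ}
    (hs : 0 ≤ s) : f s = f 1 * s := by
  refine eq_mul_of_additive (additive_of_eventually_additive h.map_zero_s14 ?_) hrc0 hs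
  filter_upwards [hg, self_mem_nhdsWithin] with x hgx (hx : 0 < x) y hy
  simpa [hgx] using h x y hx.le hy

theorem exists_eq_mul_log_of_eventually_g_eq (h : TwistedAdditive f g)
    (hrc0 : ContinuousWithinAt f (Ici 0) 0) {α : ℝ} (hα : 0 < α)
    (hg : ∀ᶠ s in 𝓝[>] 0, g s = α * s + 1) :
    ∃ a, ∀ s, 0 ≤ s → f s = a * Real.log (α * s + 1) := by
  -- in the coordinate `x = log (α * s + 1)` the equation becomes Cauchy's equation
  set φ : ℝ → ℝ := fun x => (Real.exp x - 1) / α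
  have hφ0 : ∀ x, 0 ≤ x → 0 ≤ φ x := fun x hx =>
    div_nonneg (by linarith [Real.add_one_le_exp x]) hα.le
  have hφc : Continuous φ := by fun_prop
  have hφ : Tendsto φ (𝓝[>] 0) (𝓝[>] 0) := tendsto_nhdsWithin_iff.2
    ⟨by simpa [φ] using (hφc.tendsto 0).mono_left nhdsWithin_le_nhds,
      eventually_nhdsWithin_of_forall fun x (hx : 0 < x) =>
        div_pos (by linarith [Real.add_one_lt_exp hx.ne']) hα⟩
  set L : ℝ → ℝ := fun x => f (φ x) with hL
  have hadd : ∀ x y, 0 ≤ x → 0 ≤ y → L (x + y) = L x + L y := by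
    refine additive_of_eventually_additive (by simp [L, φ, h.map_zero_s14]) ?_
    filter_upwards [hφ.eventually hg, self_mem_nhdsWithin] with x hgx (hx : 0 < x) y hy
    rw [← h _ _ (hφ0 x hx.le) (hφ0 y hy), hgx]
    simp only [L, φ, Real.exp_add]
    congr 1
    field_simp
    ring
  have hcont : ContinuousWithinAt L (Ici 0) 0 :=
    hrc0.comp_of_eq hφc.continuousWithinAt (fun x hx => hφ0 x hx) (by simp [φ])
  refine ⟨L 1, fun s hs => ?_⟩
  have hlog : φ (Real.log (α * s + 1)) = s := by
    simp only [φ]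
    rw [Real.exp_log (by positivity)]
    field_simp
    ring
  rw [← eq_mul_of_additive hadd hcont (Real.log_nonneg (by nlinarith)), hL]
  dsimp only
  rw [hlog]

theorem eqOn_zero_of_eventually_g_eq_of_zero (h : TwistedAdditive f g)
    (hrc0 : ContinuousWithinAt f (Ici 0) 0) {α : ℝ} (hα : 0 ≤ α)
    (hg : ∀ᶠ s in 𝓝[>] 0, g s = α * s + 1) {m : ℝ} (hm : 0 < m) (hfm : f m = 0) :
    EqOn f 0 (Ici 0) := by
  intro s (hs : 0 ≤ s)
  rcases hα.eq_or_lt with rfl | hα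
  · have hlin := fun s (hs : 0 ≤ s) => h.eq_mul_of_eventually_g_eq_one hrc0 (by simpa using hg) hs
    have hf1 : f 1 = 0 := by
      have := hlin m hm.le
      rw [hfm] at this
      exact (mul_eq_zero.1 this.symm).resolve_right hm.ne'
    simp [hlin s hs, hf1]
  · obtain ⟨a, ha⟩ := h.exists_eq_mul_log_of_eventually_g_eq hrc0 hα hg
    have hlog : 0 < Real.log (α * m + 1) := Real.log_pos (by nlinarith)
    have ha0 : a = 0 := by
      have := ha m hm.le
      rw [hfm] at this
      exact (mul_eq_zero.1 this.symm).resolve_right hlog.ne'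
    simp [ha s hs, ha0]

theorem eventually_g_eq_of_isLeast (h : TwistedAdditive f g) (hgpos : ∀ s, 0 ≤ s → 0 < g s)
    (hg1 : Tendsto g (𝓝[≥] 0) (𝓝 1)) {m : ℝ} (hm : IsLeast {w | 0 < w ∧ f w = 0} m)
    (hb : 1 ≤ g m) : ∀ᶠ t in 𝓝[>] 0, g t = (g m - 1) / m * t + 1 := by
  obtain ⟨⟨hm0, hfm⟩, hmin⟩ := hm
  set b := g m
  have hb0 : 0 < b := by linarith
  have hK : ∀ t, 0 ≤ t → f (m + b * t) = f t := fun t ht => by simpa [hfm] using h m t hm0.le ht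
  -- `t ↦ m + b * t` would pull a zero in `(m, m + b * m)` back to a zero in `(0, m)`
  have hgap : ∀ z, 0 < z → f z = 0 → z < m + b * m → z = m := by
    intro z hz hfz hzb
    refine le_antisymm (not_lt.1 fun hmz => ?_) (hmin ⟨hz, hfz⟩)
    have hz' : 0 ≤ (z - m) / b := div_nonneg (by linarith) hb0.le
    have := hmin (a := (z - m) / b) ⟨div_pos (by linarith) hb0, by
      rw [← hK _ hz', mul_div_cancel₀ _ hb0.ne', add_sub_cancel, hfz]⟩
    rw [le_div_iff₀ hb0] at this
    linarith
  -- `w t` is a zero of `f`, since `t + g t * w t = m + b * t`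
  set w := fun t => (m + (b - 1) * t) / g t
  have hwz : ∀ t, 0 < t → 0 < w t ∧ f (w t) = 0 := by
    intro t ht
    have hgt := hgpos t ht.le
    have hwpos : 0 < w t := div_pos (by nlinarith) hgt
    refine ⟨hwpos, ?_⟩
    have := h t (w t) ht.le hwpos.le
    rw [show t + g t * w t = m + b * t by simp only [w]; field_simp; ring, hK t ht.le] at this
    linarith
  have hlim : Tendsto w (𝓝[>] 0) (𝓝 m) := by
    have := ((tendsto_const_nhds (x := m)).add ((tendsto_id.mono_left
      nhdsWithin_le_nhds).const_mul (b - 1))).div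
      (hg1.mono_left (nhdsWithin_mono _ Ioi_subset_Ici_self)) one_ne_zero
    simp only [add_zero, mul_zero, div_one] at this
    exact this
  filter_upwards [hlim.eventually (gt_mem_nhds (by nlinarith : m < m + b * m)),
    self_mem_nhdsWithin] with t hwt (ht : 0 < t)
  have := hgap _ (hwz t ht).1 (hwz t ht).2 hwt
  have hgt := (hgpos t ht.le).ne'
  simp only [w] at this
  field_simp at this ⊢
  linarith

theorem map_ne_zero_of_pos (h : TwistedAdditive f g) (hgnn : ∀ s, 0 ≤ s → 0 ≤ g s)
    (hrc : ∀ s, 0 ≤ s → ContinuousWithinAt f (Ici s) s) (hf : ¬EqOn f 0 (Ici 0)) {w : ℝ}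
    (hw : 0 < w) : f w ≠ 0 := by
  intro hfw
  have hgpos := h.g_pos_s14 hgnn hf
  have hg1 := h.tendsto_g_nhdsGE_zero hgpos hrc hf
  set W := {w | 0 < w ∧ f w = 0}
  have hW1 : ∀ z ∈ W, 1 ≤ g z := fun z hz =>
    not_lt.1 fun hlt => hf (h.eqOn_zero_of_zero_of_g_lt_one hgnn hrc hz.1 hz.2 hlt)
  have hWne : W.Nonempty := ⟨w, hw, hfw⟩
  have hglb : IsGLB W (sInf W) := isGLB_csInf hWne ⟨0, fun z hz => hz.1.le⟩
  have hm0 : 0 ≤ sInf W := hglb.2 fun z hz => hz.1.le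
  rcases hm0.eq_or_lt with hm | hm
  · rw [← hm] at hglb
    refine hf (h.eqOn_zero_of_frequently_zero hrc hg1 ?_)
    exact (hglb.frequently_mem hWne).mono fun z hz => ⟨hz.1, hz.2, hW1 z hz⟩
  · have hfm : f (sInf W) = 0 :=
      (hrc _ hm0).eq_of_frequently_eq ((hglb.frequently_mem hWne).mono fun z hz => hz.2)
    have hleast : IsLeast W (sInf W) := ⟨⟨hm, hfm⟩, hglb.1⟩
    exact hf (h.eqOn_zero_of_eventually_g_eq_of_zero (hrc 0 le_rfl)
      (div_nonneg (sub_nonneg.2 (hW1 _ hleast.1)) hm0)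
      (h.eventually_g_eq_of_isLeast hgpos hg1 hleast (hW1 _ hleast.1)) hm hfm)

theorem injOn (h : TwistedAdditive f g) (hgpos : ∀ s, 0 ≤ s → 0 < g s)
    (hnz : ∀ w, 0 < w → f w ≠ 0) : InjOn f (Ici 0) := by
  have hlt : ∀ u v, 0 ≤ u → u < v → f u ≠ f v := by
    intro u v hu huv hfe
    have hgu := hgpos u hu
    have := h u ((v - u) / g u) hu (div_nonneg (by linarith) hgu.le)
    rw [mul_div_cancel₀ _ hgu.ne', add_sub_cancel, ← hfe] at this
    exact hnz _ (div_pos (sub_pos.2 huv) hgu) (by linarith)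
  intro u (hu : 0 ≤ u) v (hv : 0 ≤ v) hfe
  rcases lt_trichotomy u v with huv | rfl | hvu
  · exact absurd hfe (hlt u v hu huv)
  · rfl
  · exact absurd hfe.symm (hlt v u hv hvu)

theorem exists_g_eq_mul_add_one (h : TwistedAdditive f g) (hgpos : ∀ s, 0 ≤ s → 0 < g s)
    (hinj : InjOn f (Ici 0)) : ∃ α, 0 ≤ α ∧ ∀ s, 0 ≤ s → g s = α * s + 1 := by
  have hg : ∀ s, 0 ≤ s → g s = (g 1 - 1) * s + 1 := by
    intro s hs
    have := hinj (x₁ := s + g s * 1) (x₂ := 1 + g 1 * s)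
      (mem_Ici.2 (by nlinarith [hgpos s hs])) (mem_Ici.2 (by nlinarith [hgpos 1 zero_le_one]))
      (by rw [h s 1 hs zero_le_one, h 1 s zero_le_one hs, add_comm])
    linarith
  refine ⟨g 1 - 1, not_lt.1 fun hneg => ?_, hg⟩
  have hs : 0 < -1 / (g 1 - 1) := div_pos_of_neg_of_neg (by norm_num) hneg
  have := hgpos _ hs.le
  rw [hg _ hs.le, mul_div_cancel₀ _ hneg.ne] at this
  norm_num at this

end TwistedAdditive

/-- full classification of non-zero solutions right continuous at a point. -/
theorem stmt14 (f : ℝ → ℝ) (g : ℝ → ℝ)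
    (hgnn : ∀ s : ℝ, 0 ≤ s → 0 ≤ g s)
    (heq : ∀ s t : ℝ, 0 ≤ s → 0 ≤ t → f (s + g s * t) = f s + f t)
    (hfnz : ∃ s : ℝ, 0 ≤ s ∧ f s ≠ 0)
    (hrc : ∃ s : ℝ, 0 ≤ s ∧ ContinuousWithinAt f (Set.Ici s) s) :
    ((∀ s : ℝ, 0 ≤ s → g s = 1) ∧ ∃ a : ℝ, a ≠ 0 ∧ ∀ s : ℝ, 0 ≤ s → f s = a * s) ∨
    (∃ α : ℝ, 0 < α ∧ ∃ a : ℝ, a ≠ 0 ∧ ∀ s : ℝ, 0 ≤ s →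
      g s = α * s + 1 ∧ f s = a * Real.log (α * s + 1)) := by
  have h : TwistedAdditive f g := heq
  have hf : ¬EqOn f 0 (Ici 0) := fun h0 => by
    obtain ⟨s, hs, hfs⟩ := hfnz
    exact hfs (h0 hs)
  have hgpos := h.g_pos_s14 hgnn hf
  have hrc0 : ContinuousWithinAt f (Ici 0) 0 := by
    obtain ⟨s, hs, hc⟩ := hrc
    exact (h.continuousWithinAt_Ici_iff hs (hgpos s hs)).1 hc
  have hrc' s (hs : 0 ≤ s) := (h.continuousWithinAt_Ici_iff hs (hgpos s hs)).2 hrc0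
  obtain ⟨α, hα, hgα⟩ :=
    h.exists_g_eq_mul_add_one hgpos (h.injOn hgpos fun _ => h.map_ne_zero_of_pos hgnn hrc' hf)
  have hgα' : ∀ᶠ s in 𝓝[>] 0, g s = α * s + 1 :=
    eventually_nhdsWithin_of_forall fun s (hs : 0 < s) => hgα s hs.le
  rcases hα.eq_or_lt with rfl | hα
  · have hlin s (hs : 0 ≤ s) := h.eq_mul_of_eventually_g_eq_one hrc0 (by simpa using hgα') hs
    refine .inl ⟨fun s hs => by simpa using hgα s hs, f 1, fun hf1 => hf fun s hs => ?_, hlin⟩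
    simp [hlin s hs, hf1]
  · obtain ⟨a, ha⟩ := h.exists_eq_mul_log_of_eventually_g_eq hrc0 hα hgα'
    exact .inr ⟨α, hα, a, fun ha0 => hf fun s hs => by simp [ha s hs, ha0],
      fun s hs => ⟨hgα s hs, ha s hs⟩⟩
end

section
/- Let X be a real topological vector space whose continuous dual X* separates points. Let f : [0,∞) → X be non-zero with x*∘f right continuous at some point for every x* ∈ X*, and g : [0,∞) → [0,∞) satisfy f(s + g(s)·t) = f(s) + f(t) for all s,t ≥ 0. Then either g ≡ 1 and f(s) = s·a for some a ∈ X\{0}, or there exist α > 0 and a ∈ X\{0} such that g(s) = αs+1 and f(s) = log(αs+1)·a for all s ≥ 0. -/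
/-!
Testing against a functional `φ` with `φ (f s₁) ≠ 0` gives a real solution `h = φ ∘ f ≢ 0` of
`h (s + g s * t) = h s + h t` that is right-continuous at one point, and for such an `h` each of
the following symmetries forces `h ≡ 0`. Arbitrarily small periods make `h` constant on a
half-line, hence zero. An invariance `h (A + r (x - A)) = h x` with `r < 1` can be transported to
a second centre, the two contractions differ by a period, and conjugating it by the contraction
makes it arbitrarily small. A period forces `g = 1` at its multiples, and then, through the Goła̧b–Schinzel equation
`g (s + g s * t) = g s * g t`, either some `g u > 1` divides the period by `g u` indefinitely, or
`g ≡ 1` and `h` is linear with a zero at the period. Consequently a collision `h a = h b` forces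
`g` to be affine, and if `h` is injective, `h (s + g s * t) = h (t + g t * s)` does too.
For `g s = α s + 1` with `α > 0`, `h ∘ E` with `E u = (exp (α u) - 1) / α` is additive, so each
`φ ∘ f` is a multiple of `log (α s + 1)` (of `s` when `α = 0`), and the dual separating points
transfers this to `f`.
-/

open Set Filter Topology

section TailPeriods

variable {α : Type*} {H : ℝ → α}

theorem map_add_nat_mul_of_tail_period {a p : ℝ} (hp : 0 ≤ p)
    (hper : ∀ t, a ≤ t → H (t + p) = H t) (n : ℕ) {t : ℝ} (ht : a ≤ t) :
    H (t + n * p) = H t := by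
  induction n with
  | zero => simp
  | succ n ih =>
    have hnp : 0 ≤ (n : ℝ) * p := mul_nonneg n.cast_nonneg hp
    rw [Nat.cast_succ, add_one_mul, ← add_assoc, hper _ (by linarith), ih]

theorem eq_of_tendsto_tail_period [TopologicalSpace α] [T1Space α] {s₀ : ℝ}
    (hc : ContinuousWithinAt H (Ici s₀) s₀) {p : ℕ → ℝ} (hp₀ : ∀ n, 0 < p n)
    (hp : Tendsto p atTop (𝓝 0)) (hper : ∀ n t, s₀ ≤ t → H (t + p n) = H t)
    {w : ℝ} (hw : s₀ ≤ w) : H w = H s₀ := by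
  refine (specializes_iff_forall_open.2 fun U hU hU₀ => ?_).eq
  obtain ⟨δ, hδ, hδU⟩ := mem_nhdsGE_iff_exists_Ico_subset.1 (hc (hU.mem_nhds hU₀))
  obtain ⟨n, hn⟩ := ((tendsto_order.1 hp).2 _ (sub_pos.2 (mem_Ioi.1 hδ))).exists
  set k := ⌊(w - s₀) / p n⌋₊
  have hk : k * p n ≤ w - s₀ :=
    (le_div_iff₀ (hp₀ n)).1 (Nat.floor_le (div_nonneg (sub_nonneg.2 hw) (hp₀ n).le))
  have hk' : w - s₀ < (k + 1) * p n := (div_lt_iff₀ (hp₀ n)).1 (Nat.lt_floor_add_one _)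
  have hwk : H w = H (w - k * p n) := by
    rw [← map_add_nat_mul_of_tail_period (hp₀ n).le (hper n) k (t := w - k * p n) (by linarith),
      sub_add_cancel]
  rw [hwk]
  exact hδU ⟨by linarith, by linarith⟩

theorem tail_period_of_affine_invariant {R c₁ c₂ W : ℝ} (hR : 0 < R)
    (h₁ : ∀ x, W ≤ x → H (R * x + c₁) = H x) (h₂ : ∀ x, W ≤ x → H (R * x + c₂) = H x)
    {v : ℝ} (hv : R * W + c₁ ≤ v) : H (v + (c₂ - c₁)) = H v := by
  obtain ⟨x, hx, rfl⟩ : ∃ x, W ≤ x ∧ v = R * x + c₁ :=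
    ⟨(v - c₁) / R, by rw [le_div_iff₀ hR]; linarith, by field_simp; ring⟩
  rw [show R * x + c₁ + (c₂ - c₁) = R * x + c₂ by ring, h₂ x hx, h₁ x hx]

theorem tail_period_pow_mul_of_contraction {A r q : ℝ} (hr : 0 < r) (hq : 0 ≤ q)
    (hinv : ∀ x, A ≤ x → H (A + r * (x - A)) = H x) (hper : ∀ x, A ≤ x → H (x + q) = H x)
    (n : ℕ) {x : ℝ} (hx : A ≤ x) : H (x + r ^ n * q) = H x := by
  induction n generalizing x with
  | zero => simpa using hper x hx
  | succ n ih =>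
    obtain ⟨w, hw, rfl⟩ : ∃ w, A ≤ w ∧ x = A + r * (w - A) :=
      ⟨A + (x - A) / r, le_add_of_nonneg_right (div_nonneg (sub_nonneg.2 hx) hr.le),
        by field_simp; ring⟩
    have hrnq : 0 ≤ r ^ n * q := mul_nonneg (pow_nonneg hr.le n) hq
    rw [show A + r * (w - A) + r ^ (n + 1) * q = A + r * (w + r ^ n * q - A) by ring,
      hinv _ (by linarith), ih hw, hinv w hw]

end TailPeriods

section FunctionalEquation

variable {h g : ℝ → ℝ} {s₀ : ℝ}

theorem map_zero_of_map_add_mul (hfe : ∀ s t, 0 ≤ s → 0 ≤ t → h (s + g s * t) = h s + h t) :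
    h 0 = 0 := by
  simpa using hfe 0 0 le_rfl le_rfl

theorem pos_of_map_add_mul (hfe : ∀ s t, 0 ≤ s → 0 ≤ t → h (s + g s * t) = h s + h t)
    (hg : ∀ s, 0 ≤ s → 0 ≤ g s) (hne : ¬EqOn h 0 (Ici 0)) {s : ℝ} (hs : 0 ≤ s) : 0 < g s := by
  refine (hg s hs).lt_of_ne fun hgs => hne fun t ht => ?_
  simpa [← hgs] using hfe s t hs ht

theorem period_div_of_tail_period (hfe : ∀ s t, 0 ≤ s → 0 ≤ t → h (s + g s * t) = h s + h t)
    {V p : ℝ} (hV : 0 ≤ V) (hgV : 0 < g V) (hp : 0 ≤ p) (hper : ∀ v, V ≤ v → h (v + p) = h v)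
    {t : ℝ} (ht : 0 ≤ t) : h (t + p / g V) = h t := by
  have key := hfe V (t + p / g V) hV (by positivity)
  rw [mul_add, mul_div_cancel₀ _ hgV.ne', ← add_assoc,
    hper _ (le_add_of_nonneg_right (mul_nonneg hgV.le ht)), hfe V t hV ht] at key
  exact ((add_right_inj _).1 key).symm

theorem eqOn_zero_of_tendsto_tail_period
    (hfe : ∀ s t, 0 ≤ s → 0 ≤ t → h (s + g s * t) = h s + h t) (hg : ∀ s, 0 ≤ s → 0 < g s)
    (hs₀ : 0 ≤ s₀) (hc : ContinuousWithinAt h (Ici s₀) s₀) {V : ℝ} (hV : 0 ≤ V) {p : ℕ → ℝ}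
    (hp₀ : ∀ n, 0 < p n) (hp : Tendsto p atTop (𝓝 0))
    (hper : ∀ n v, V ≤ v → h (v + p n) = h v) : EqOn h 0 (Ici 0) := by
  have hconst : ∀ w, s₀ ≤ w → h w = h s₀ := fun w hw =>
    eq_of_tendsto_tail_period hc (fun n => div_pos (hp₀ n) (hg V hV))
      (by simpa using hp.div_const (g V))
      (fun n t ht => period_div_of_tail_period hfe hV (hg V hV) (hp₀ n).le (hper n) (hs₀.trans ht))
      hw
  intro t ht
  have key := hfe s₀ t hs₀ ht
  rw [hconst _ (le_add_of_nonneg_right (mul_nonneg (hg s₀ hs₀).le ht))] at key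
  simpa using key

theorem eq_mul_of_map_add {H : ℝ → ℝ} (hadd : ∀ u v, 0 ≤ u → 0 ≤ v → H (u + v) = H u + H v)
    {u₀ : ℝ} (hu₀ : 0 ≤ u₀) (hc : ContinuousWithinAt H (Ici u₀) u₀) {u : ℝ} (hu : 0 ≤ u) :
    H u = u * H 1 := by
  set D : ℝ → ℝ := fun u => H u - u * H 1
  have hDadd : ∀ u v, 0 ≤ u → 0 ≤ v → D (u + 1 * v) = D u + D v := fun u v hu hv => by
    simp only [D, one_mul, hadd u v hu hv]; ring
  have hDnat : ∀ (n : ℕ) {v}, 0 ≤ v → D (n * v) = n * D v := by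
    intro n v hv
    induction n with
    | zero => simpa [D] using hadd 0 0 le_rfl le_rfl
    | succ n ih =>
      have := hDadd (n * v) v (mul_nonneg n.cast_nonneg hv) hv
      rw [one_mul] at this
      rw [Nat.cast_succ, add_one_mul, this, ih]; ring
  have hDper : ∀ (n : ℕ) v, 0 ≤ v → D (v + 1 / (n + 1)) = D v := by
    intro n v hv
    have hD1 : D (1 / (n + 1)) = 0 := by
      have := hDnat (n + 1) (v := 1 / (n + 1)) (by positivity)
      rw [Nat.cast_succ, mul_one_div_cancel (by positivity)] at this
      simpa [D, (by positivity : (n : ℝ) + 1 ≠ 0)] using this.symm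
    rw [← add_zero (D v), ← hD1, ← hDadd v _ hv (by positivity), one_mul]
  have hD := eqOn_zero_of_tendsto_tail_period (g := fun _ => 1) hDadd (fun _ _ => one_pos) hu₀
    (hc.sub (continuousWithinAt_id.mul continuousWithinAt_const)) le_rfl
    (fun n => by positivity) tendsto_one_div_add_atTop_nhds_zero_nat hDper hu
  simpa [D, sub_eq_zero] using hD

theorem exists_eq_mul_of_eq_one (hfe : ∀ s t, 0 ≤ s → 0 ≤ t → h (s + g s * t) = h s + h t)
    (hg : ∀ s, 0 ≤ s → g s = 1) (hs₀ : 0 ≤ s₀) (hc : ContinuousWithinAt h (Ici s₀) s₀) :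
    ∃ c, ∀ s, 0 ≤ s → h s = c * s :=
  ⟨h 1, fun s hs => (eq_mul_of_map_add (fun u v hu hv => by simpa [hg u hu] using hfe u v hu hv)
    hs₀ hc hs).trans (mul_comm _ _)⟩

theorem affine_invariant_transport (hfe : ∀ s t, 0 ≤ s → 0 ≤ t → h (s + g s * t) = h s + h t)
    (hg : ∀ s, 0 ≤ s → 0 < g s) {R c W s : ℝ} (hR : 0 < R) (hW : 0 ≤ W) (hRW : 0 ≤ R * W + c)
    (hinv : ∀ x, W ≤ x → h (R * x + c) = h x) (hs : 0 ≤ s) {w : ℝ} (hw : s + g s * W ≤ w) :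
    h (R * w + (s * (1 - R) + g s * c)) = h w := by
  obtain ⟨x, hx, rfl⟩ : ∃ x, W ≤ x ∧ w = s + g s * x :=
    ⟨(w - s) / g s, by rw [le_div_iff₀ (hg s hs)]; linarith, by field_simp [(hg s hs).ne']; ring⟩
  have hRx : 0 ≤ R * x + c := by nlinarith
  rw [show R * (s + g s * x) + (s * (1 - R) + g s * c) = s + g s * (R * x + c) by ring,
    hfe s _ hs hRx, hinv x hx, hfe s x hs (hW.trans hx)]

theorem eqOn_zero_of_contraction (hfe : ∀ s t, 0 ≤ s → 0 ≤ t → h (s + g s * t) = h s + h t)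
    (hg : ∀ s, 0 ≤ s → 0 < g s) (hs₀ : 0 ≤ s₀) (hc : ContinuousWithinAt h (Ici s₀) s₀)
    {A r : ℝ} (hA : 0 ≤ A) (hr₀ : 0 < r) (hr₁ : r < 1)
    (hinv : ∀ x, A ≤ x → h (A + r * (x - A)) = h x) : EqOn h 0 (Ici 0) := by
  have hinvA : ∀ x, A ≤ x → h (r * x + (1 - r) * A) = h x := fun x hx => by
    rw [← hinv x hx]; ring_nf
  -- transported by `A + 1`, the contraction becomes one about `B > A`; they differ by a translation
  set s := A + 1
  set B := s + g s * A with hB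
  have hAB : A + 1 ≤ B := le_add_of_nonneg_right (mul_nonneg (hg s (by positivity)).le hA)
  have hinvB : ∀ x, B ≤ x → h (r * x + (1 - r) * B) = h x := fun x hx => by
    have := affine_invariant_transport hfe hg hr₀ hA (by nlinarith) hinvA (by positivity) hx
    rwa [show s * (1 - r) + g s * ((1 - r) * A) = (1 - r) * B by rw [hB]; ring] at this
  set V := r * B + (1 - r) * A
  have hV : 0 ≤ V := by nlinarith
  have hd : 0 < (1 - r) * B - (1 - r) * A := by nlinarith
  set q := ((1 - r) * B - (1 - r) * A) / g V
  have hq : 0 < q := div_pos hd (hg V hV)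
  have hperq : ∀ x, A ≤ x → h (x + q) = h x := fun x hx =>
    period_div_of_tail_period hfe hV (hg V hV) hd.le
      (fun v hv => tail_period_of_affine_invariant hr₀ (fun x hx => hinvA x (by linarith)) hinvB hv)
      (hA.trans hx)
  exact eqOn_zero_of_tendsto_tail_period hfe hg hs₀ hc hA (p := fun n => r ^ n * q)
    (fun n => by positivity)
    (by simpa using (tendsto_pow_atTop_nhds_zero_of_lt_one hr₀.le hr₁).mul_const q)
    (fun n x hx => tail_period_pow_mul_of_contraction hr₀ hq.le hinv hperq n hx)

theorem eq_of_map_add_mul_eq (hne : ¬EqOn h 0 (Ici 0))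
    (hfe : ∀ s t, 0 ≤ s → 0 ≤ t → h (s + g s * t) = h s + h t) (hg : ∀ s, 0 ≤ s → 0 < g s)
    (hs₀ : 0 ≤ s₀) (hc : ContinuousWithinAt h (Ici s₀) s₀) {P γ₁ γ₂ : ℝ} (hP : 0 ≤ P)
    (hγ₁ : 0 < γ₁) (hγ₂ : 0 < γ₂) (hγ : ∀ u, 0 ≤ u → h (P + γ₁ * u) = h (P + γ₂ * u)) :
    γ₁ = γ₂ := by
  wlog hlt : γ₂ < γ₁ generalizing γ₁ γ₂
  · rcases (not_lt.1 hlt).lt_or_eq with hlt | heq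
    · exact (this hγ₂ hγ₁ (fun u hu => (hγ u hu).symm) hlt).symm
    · exact heq
  refine absurd (eqOn_zero_of_contraction hfe hg hs₀ hc hP (div_pos hγ₂ hγ₁)
    ((div_lt_one hγ₁).2 hlt) fun x hx => ?_) hne
  obtain ⟨u, hu, rfl⟩ : ∃ u, 0 ≤ u ∧ x = P + γ₁ * u :=
    ⟨(x - P) / γ₁, div_nonneg (sub_nonneg.2 hx) hγ₁.le, by field_simp; ring⟩
  rw [hγ u hu]
  congr 1
  field_simp
  ring

theorem map_add_mul_eq_mul (hne : ¬EqOn h 0 (Ici 0))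
    (hfe : ∀ s t, 0 ≤ s → 0 ≤ t → h (s + g s * t) = h s + h t) (hg : ∀ s, 0 ≤ s → 0 < g s)
    (hs₀ : 0 ≤ s₀) (hc : ContinuousWithinAt h (Ici s₀) s₀) {s t : ℝ} (hs : 0 ≤ s) (ht : 0 ≤ t) :
    g (s + g s * t) = g s * g t := by
  have hP : 0 ≤ s + g s * t := add_nonneg hs (mul_nonneg (hg s hs).le ht)
  refine eq_of_map_add_mul_eq hne hfe hg hs₀ hc hP (hg _ hP) (mul_pos (hg s hs) (hg t ht))
    fun u hu => ?_
  rw [hfe _ u hP hu, show s + g s * t + g s * g t * u = s + g s * (t + g t * u) by ring,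
    hfe s _ hs (add_nonneg ht (mul_nonneg (hg t ht).le hu)), hfe t u ht hu, hfe s t hs ht,
    add_assoc]

theorem eqOn_zero_of_period_of_one_lt
    (hfe : ∀ s t, 0 ≤ s → 0 ≤ t → h (s + g s * t) = h s + h t) (hg : ∀ s, 0 ≤ s → 0 < g s)
    (hs₀ : 0 ≤ s₀) (hc : ContinuousWithinAt h (Ici s₀) s₀) {q u : ℝ} (hq : 0 < q)
    (hper : ∀ t, 0 ≤ t → h (t + q) = h t) (hu : 0 ≤ u) (hgu : 1 < g u) : EqOn h 0 (Ici 0) := by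
  have hgu₀ := hg u hu
  have hpow : ∀ (n : ℕ) t, 0 ≤ t → h (t + q / g u ^ n) = h t := by
    intro n
    induction n with
    | zero => simpa using hper
    | succ n ih =>
      intro t ht
      rw [pow_succ, ← div_div]
      exact period_div_of_tail_period hfe hu hgu₀ (by positivity)
        (fun v hv => ih v (hu.trans hv)) ht
  exact eqOn_zero_of_tendsto_tail_period hfe hg hs₀ hc le_rfl (p := fun n => q / g u ^ n)
    (fun n => by positivity) (tendsto_const_nhds.div_atTop (tendsto_pow_atTop_atTop_of_one_lt hgu))
    hpow

theorem eq_one_of_period (hne : ¬EqOn h 0 (Ici 0))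
    (hfe : ∀ s t, 0 ≤ s → 0 ≤ t → h (s + g s * t) = h s + h t) (hg : ∀ s, 0 ≤ s → 0 < g s)
    (hs₀ : 0 ≤ s₀) (hc : ContinuousWithinAt h (Ici s₀) s₀) {q : ℝ} (hq : 0 < q)
    (hper : ∀ t, 0 ≤ t → h (t + q) = h t) (hle : ∀ s, 0 ≤ s → g s ≤ 1) {w : ℝ} (hw : 0 ≤ w) :
    g w = 1 := by
  have hperk := fun (k : ℕ) t (ht : 0 ≤ t) => map_add_nat_mul_of_tail_period hq.le hper k ht
  -- `h (k q + g (k q) * u) = h u = h (k q + u)`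
  have hgk : ∀ k : ℕ, g (k * q) = 1 := fun k => by
    have hk : 0 ≤ (k : ℝ) * q := by positivity
    have hk0 : h (k * q) = 0 := by simpa [map_zero_of_map_add_mul hfe] using hperk k 0 le_rfl
    refine eq_of_map_add_mul_eq hne hfe hg hs₀ hc hk (hg _ hk) one_pos fun u hu => ?_
    rw [hfe _ u hk hu, hk0, zero_add, one_mul, add_comm, hperk k u hu]
  obtain ⟨k, hk⟩ := exists_nat_ge (w / q)
  have hkw : w ≤ k * q := (div_le_iff₀ hq).1 hk
  have hgw := hg w hw
  set t := (k * q - w) / g w with ht_def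
  have ht : 0 ≤ t := div_nonneg (by linarith) hgw.le
  have hgwt := map_add_mul_eq_mul hne hfe hg hs₀ hc hw ht
  rw [show w + g w * t = k * q by rw [ht_def]; field_simp; ring, hgk] at hgwt
  nlinarith [hle w hw, hle t ht, hg t ht]

theorem eqOn_zero_of_period_of_eq_one
    (hfe : ∀ s t, 0 ≤ s → 0 ≤ t → h (s + g s * t) = h s + h t) (hg : ∀ s, 0 ≤ s → g s = 1)
    (hs₀ : 0 ≤ s₀) (hc : ContinuousWithinAt h (Ici s₀) s₀) {q : ℝ} (hq : 0 < q)
    (hper : ∀ t, 0 ≤ t → h (t + q) = h t) : EqOn h 0 (Ici 0) := by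
  obtain ⟨c, hlin⟩ := exists_eq_mul_of_eq_one hfe hg hs₀ hc
  have hq0 : h q = 0 := by simpa [map_zero_of_map_add_mul hfe] using hper 0 le_rfl
  rw [hlin q hq.le] at hq0
  intro t ht
  simp [hlin t ht, (mul_eq_zero.1 hq0).resolve_right hq.ne']

theorem eqOn_zero_of_tail_period (hfe : ∀ s t, 0 ≤ s → 0 ≤ t → h (s + g s * t) = h s + h t)
    (hg : ∀ s, 0 ≤ s → 0 < g s) (hs₀ : 0 ≤ s₀) (hc : ContinuousWithinAt h (Ici s₀) s₀)
    {V d : ℝ} (hd : 0 < d) (hper : ∀ v, V ≤ v → h (v + d) = h v) : EqOn h 0 (Ici 0) := by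
  have hV : 0 ≤ max V 0 := le_max_right _ _
  have hq : 0 < d / g (max V 0) := div_pos hd (hg _ hV)
  have hperq : ∀ t, 0 ≤ t → h (t + d / g (max V 0)) = h t := fun t ht =>
    period_div_of_tail_period hfe hV (hg _ hV) hd.le
      (fun v hv => hper v ((le_max_left _ _).trans hv)) ht
  by_cases hgu : ∃ u, 0 ≤ u ∧ 1 < g u
  · obtain ⟨u, hu, hgu⟩ := hgu
    exact eqOn_zero_of_period_of_one_lt hfe hg hs₀ hc hq hperq hu hgu
  push Not at hgu
  by_contra hne
  exact hne (eqOn_zero_of_period_of_eq_one hfe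
    (fun s hs => eq_one_of_period hne hfe hg hs₀ hc hq hperq hgu hs) hs₀ hc hq hperq)

theorem exists_affine_of_invariant (hne : ¬EqOn h 0 (Ici 0))
    (hfe : ∀ s t, 0 ≤ s → 0 ≤ t → h (s + g s * t) = h s + h t) (hg : ∀ s, 0 ≤ s → 0 < g s)
    (hs₀ : 0 ≤ s₀) (hc : ContinuousWithinAt h (Ici s₀) s₀) {R c a : ℝ} (hR : 0 < R) (hR₁ : R ≠ 1)
    (ha : 0 ≤ a) (hRa : 0 ≤ R * a + c) (hinv : ∀ x, a ≤ x → h (R * x + c) = h x) :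
    ∃ α, ∀ s, 0 ≤ s → g s = α * s + 1 := by
  -- transport by `s` (`affine_invariant_transport`) turns the offset `c` into this one
  by_cases hshift : ∀ s, 0 ≤ s → s * (1 - R) + g s * c = c
  · have hc₀ : c ≠ 0 := fun hc₀ => hR₁ <| by
      have := hshift 1 zero_le_one
      rw [hc₀] at this
      linarith
    refine ⟨(R - 1) / c, fun s hs => ?_⟩
    have := hshift s hs
    field_simp
    linarith
  push Not at hshift
  obtain ⟨s, hs, hsc⟩ := hshift
  set W := max a (s + g s * a)
  have h₁ : ∀ x, W ≤ x → h (R * x + c) = h x := fun x hx => hinv x ((le_max_left _ _).trans hx)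
  have h₂ : ∀ x, W ≤ x → h (R * x + (s * (1 - R) + g s * c)) = h x := fun x hx =>
    affine_invariant_transport hfe hg hR ha hRa hinv hs ((le_max_right _ _).trans hx)
  refine absurd ?_ hne
  rcases hsc.lt_or_gt with hlt | hlt
  · exact eqOn_zero_of_tail_period hfe hg hs₀ hc (sub_pos.2 hlt)
      fun v hv => tail_period_of_affine_invariant hR h₂ h₁ hv
  · exact eqOn_zero_of_tail_period hfe hg hs₀ hc (sub_pos.2 hlt)
      fun v hv => tail_period_of_affine_invariant hR h₁ h₂ hv

theorem exists_affine_of_map_eq (hne : ¬EqOn h 0 (Ici 0))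
    (hfe : ∀ s t, 0 ≤ s → 0 ≤ t → h (s + g s * t) = h s + h t) (hg : ∀ s, 0 ≤ s → 0 < g s)
    (hs₀ : 0 ≤ s₀) (hc : ContinuousWithinAt h (Ici s₀) s₀) {a b : ℝ} (ha : 0 ≤ a) (hb : 0 ≤ b)
    (hab : a < b) (hhab : h a = h b) : ∃ α, ∀ s, 0 ≤ s → g s = α * s + 1 := by
  have hga := hg a ha
  set R := g b / g a with hR_def
  have hR : 0 < R := div_pos (hg b hb) hga
  have hinv : ∀ x, a ≤ x → h (R * x + (b - R * a)) = h x := fun x hx => by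
    obtain ⟨u, hu, rfl⟩ : ∃ u, 0 ≤ u ∧ x = a + g a * u :=
      ⟨(x - a) / g a, div_nonneg (sub_nonneg.2 hx) hga.le, by field_simp; ring⟩
    rw [show R * (a + g a * u) + (b - R * a) = b + g b * u by rw [hR_def]; field_simp; ring,
      hfe b u hb hu, hfe a u ha hu, hhab]
  by_cases hR₁ : R = 1
  · refine absurd (eqOn_zero_of_tail_period hfe hg hs₀ hc (V := a) (sub_pos.2 hab)
      fun v hv => ?_) hne
    simpa [hR₁, add_sub_left_comm] using hinv v hv
  exact exists_affine_of_invariant hne hfe hg hs₀ hc hR hR₁ ha (by simpa using hb) hinv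

theorem exists_affine (hne : ¬EqOn h 0 (Ici 0))
    (hfe : ∀ s t, 0 ≤ s → 0 ≤ t → h (s + g s * t) = h s + h t) (hg : ∀ s, 0 ≤ s → 0 < g s)
    (hs₀ : 0 ≤ s₀) (hc : ContinuousWithinAt h (Ici s₀) s₀) :
    ∃ α, 0 ≤ α ∧ ∀ s, 0 ≤ s → g s = α * s + 1 := by
  suffices ∃ α, ∀ s, 0 ≤ s → g s = α * s + 1 by
    obtain ⟨α, hα⟩ := this
    refine ⟨α, not_lt.1 fun hα₀ => ?_, hα⟩
    have hs : 0 ≤ -α⁻¹ := neg_nonneg.2 (inv_lt_zero.2 hα₀).le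
    simpa [hα _ hs, hα₀.ne] using hg _ hs
  by_cases hinj : InjOn h (Ici 0)
  · refine ⟨g 1 - 1, fun s hs => ?_⟩
    have := hinj (mem_Ici.2 (add_nonneg hs (mul_nonneg (hg s hs).le zero_le_one)))
      (mem_Ici.2 (add_nonneg zero_le_one (mul_nonneg (hg 1 zero_le_one).le hs)))
      (by rw [hfe s 1 hs zero_le_one, hfe 1 s zero_le_one hs, add_comm])
    linarith
  simp only [InjOn, not_forall] at hinj
  obtain ⟨a, ha, b, hb, hhab, hab⟩ := hinj
  rcases Ne.lt_or_gt hab with hab | hab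
  · exact exists_affine_of_map_eq hne hfe hg hs₀ hc ha hb hab hhab
  · exact exists_affine_of_map_eq hne hfe hg hs₀ hc hb ha hab hhab.symm

theorem exists_eq_mul_log (hfe : ∀ s t, 0 ≤ s → 0 ≤ t → h (s + g s * t) = h s + h t) {α : ℝ}
    (hα : 0 < α) (hg : ∀ s, 0 ≤ s → g s = α * s + 1) (hs₀ : 0 ≤ s₀)
    (hc : ContinuousWithinAt h (Ici s₀) s₀) : ∃ c, ∀ s, 0 ≤ s → h s = c * Real.log (α * s + 1) := by
  -- `E (u + v) = E u + g (E u) * E v`, so `h ∘ E` satisfies Cauchy's equation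
  set E : ℝ → ℝ := fun u => (Real.exp (α * u) - 1) / α with hE
  have hE_mono : Monotone E := fun u v huv => by
    simp only [hE]
    gcongr
  have hE_nonneg : ∀ u, 0 ≤ u → 0 ≤ E u := fun u hu => by simpa [hE] using hE_mono hu
  have hE_log : ∀ s, 0 ≤ s → E (Real.log (α * s + 1) / α) = s := fun s hs => by
    simp only [hE]
    rw [mul_div_cancel₀ _ hα.ne', Real.exp_log (by positivity)]
    field_simp
    ring
  have hlog : ∀ s, 0 ≤ s → 0 ≤ Real.log (α * s + 1) / α := fun s hs =>
    div_nonneg (Real.log_nonneg (by nlinarith)) hα.le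
  have hadd : ∀ u v, 0 ≤ u → 0 ≤ v → h (E (u + v)) = h (E u) + h (E v) := fun u v hu hv => by
    rw [← hfe _ _ (hE_nonneg u hu) (hE_nonneg v hv), hg _ (hE_nonneg u hu)]
    congr 1
    simp only [hE]
    rw [mul_add, Real.exp_add]
    field_simp
    ring
  set u₀ := Real.log (α * s₀ + 1) / α
  have hcE : ContinuousWithinAt (fun u => h (E u)) (Ici u₀) u₀ := by
    have hc' : ContinuousWithinAt h (Ici (E u₀)) (E u₀) := by rwa [hE_log s₀ hs₀]
    exact hc'.comp (by fun_prop : Continuous E).continuousWithinAt fun u hu => hE_mono hu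
  refine ⟨h (E 1) / α, fun s hs => ?_⟩
  have := eq_mul_of_map_add hadd (hlog s₀ hs₀) hcE (hlog s hs)
  rw [hE_log s hs] at this
  rw [this]
  ring

end FunctionalEquation

theorem eq_smul_of_forall_clm_eq_mul {X : Type*} [AddCommGroup X] [Module ℝ X] [TopologicalSpace X]
    (hsep : ∀ x : X, x ≠ 0 → ∃ φ : X →L[ℝ] ℝ, φ x ≠ 0) {f : ℝ → X} {L : ℝ → ℝ}
    (hL : ∀ φ : X →L[ℝ] ℝ, ∃ c, ∀ s, 0 ≤ s → φ (f s) = c * L s) {s₁ : ℝ} (hs₁ : 0 ≤ s₁)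
    (hLs₁ : L s₁ ≠ 0) {s : ℝ} (hs : 0 ≤ s) : f s = L s • (L s₁)⁻¹ • f s₁ := by
  by_contra hne
  obtain ⟨φ, hφ⟩ := hsep _ (sub_ne_zero.2 hne)
  obtain ⟨c, hc⟩ := hL φ
  apply hφ
  rw [map_sub, map_smul, map_smul, hc s hs, hc s₁ hs₁, smul_eq_mul, smul_eq_mul]
  field_simp
  ring

theorem stmt15_general {X : Type*} [AddCommGroup X] [Module ℝ X]
    [TopologicalSpace X]
    (hsep : ∀ x : X, x ≠ 0 → ∃ φ : X →L[ℝ] ℝ, φ x ≠ 0)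
    (f : ℝ → X) (g : ℝ → ℝ)
    (hgnn : ∀ s : ℝ, 0 ≤ s → 0 ≤ g s)
    (heq : ∀ s t : ℝ, 0 ≤ s → 0 ≤ t → f (s + g s * t) = f s + f t)
    (hfnz : ∃ s : ℝ, 0 ≤ s ∧ f s ≠ 0)
    (hrc : ∀ φ : X →L[ℝ] ℝ, ∃ s : ℝ, 0 ≤ s ∧
      ContinuousWithinAt (fun t => φ (f t)) (Set.Ici s) s) :
    ((∀ s : ℝ, 0 ≤ s → g s = 1) ∧ ∃ a : X, a ≠ 0 ∧ ∀ s : ℝ, 0 ≤ s → f s = s • a) ∨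
    (∃ α : ℝ, 0 < α ∧ ∃ a : X, a ≠ 0 ∧ ∀ s : ℝ, 0 ≤ s →
      g s = α * s + 1 ∧ f s = Real.log (α * s + 1) • a) := by
  have hfe : ∀ φ : X →L[ℝ] ℝ, ∀ s t, 0 ≤ s → 0 ≤ t → φ (f (s + g s * t)) = φ (f s) + φ (f t) :=
    fun φ s t hs ht => by rw [heq s t hs ht, map_add]
  obtain ⟨s₁, hs₁, hfs₁⟩ := hfnz
  obtain ⟨φ, hφ⟩ := hsep _ hfs₁
  have hne : ¬EqOn (fun t => φ (f t)) 0 (Ici 0) := fun h0 => hφ (h0 hs₁)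
  have hs₁₀ : s₁ ≠ 0 := by
    rintro rfl
    exact hφ (map_zero_of_map_add_mul (h := fun t => φ (f t)) (hfe φ))
  obtain ⟨s₀, hs₀, hc⟩ := hrc φ
  obtain ⟨α, hα, hgα⟩ := exists_affine hne (hfe φ)
    (fun s hs => pos_of_map_add_mul (hfe φ) hgnn hne hs) hs₀ hc
  rcases hα.eq_or_lt with rfl | hα
  · have hg : ∀ s, 0 ≤ s → g s = 1 := fun s hs => by simpa using hgα s hs
    have hL (ψ : X →L[ℝ] ℝ) : ∃ c, ∀ s, 0 ≤ s → ψ (f s) = c * id s := by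
      obtain ⟨s₀, hs₀, hc⟩ := hrc ψ
      exact exists_eq_mul_of_eq_one (hfe ψ) hg hs₀ hc
    exact Or.inl ⟨hg, _, smul_ne_zero (inv_ne_zero hs₁₀) hfs₁,
      fun s hs => eq_smul_of_forall_clm_eq_mul hsep hL hs₁ hs₁₀ hs⟩
  · have hL (ψ : X →L[ℝ] ℝ) : ∃ c, ∀ s, 0 ≤ s → ψ (f s) = c * Real.log (α * s + 1) := by
      obtain ⟨s₀, hs₀, hc⟩ := hrc ψ
      exact exists_eq_mul_log (hfe ψ) hα hgα hs₀ hc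
    have hLs₁ : Real.log (α * s₁ + 1) ≠ 0 :=
      (Real.log_pos (by nlinarith [lt_of_le_of_ne hs₁ (Ne.symm hs₁₀)])).ne'
    exact Or.inr ⟨α, hα, _, smul_ne_zero (inv_ne_zero hLs₁) hfs₁,
      fun s hs => ⟨hgα s hs, eq_smul_of_forall_clm_eq_mul hsep hL hs₁ hLs₁ hs⟩⟩

/-- vector-valued version in a real TVS whose dual separates points. -/
theorem stmt15 {X : Type*} [AddCommGroup X] [Module ℝ X]
    [TopologicalSpace X] [IsTopologicalAddGroup X] [ContinuousSMul ℝ X]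
    (hsep : ∀ x : X, x ≠ 0 → ∃ φ : X →L[ℝ] ℝ, φ x ≠ 0)
    (f : ℝ → X) (g : ℝ → ℝ)
    (hgnn : ∀ s : ℝ, 0 ≤ s → 0 ≤ g s)
    (heq : ∀ s t : ℝ, 0 ≤ s → 0 ≤ t → f (s + g s * t) = f s + f t)
    (hfnz : ∃ s : ℝ, 0 ≤ s ∧ f s ≠ 0)
    (hrc : ∀ φ : X →L[ℝ] ℝ, ∃ s : ℝ, 0 ≤ s ∧
      ContinuousWithinAt (fun t => φ (f t)) (Set.Ici s) s) :
    ((∀ s : ℝ, 0 ≤ s → g s = 1) ∧ ∃ a : X, a ≠ 0 ∧ ∀ s : ℝ, 0 ≤ s → f s = s • a) ∨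
    (∃ α : ℝ, 0 < α ∧ ∃ a : X, a ≠ 0 ∧ ∀ s : ℝ, 0 ≤ s →
      g s = α * s + 1 ∧ f s = Real.log (α * s + 1) • a) :=
  stmt15_general hsep f g hgnn heq hfnz hrc
end

section
/- Let V be a vector space over a field F, M a unital magma with the two-sided cancellation property, f : V → M non-zero, and g : V → F, satisfying f(s + g(s)·t) = f(s) + f(t) for all s,t ∈ V. Then g ≡ 1 and f is additive: f(s+t) = f(s) + f(t) for all s,t ∈ V. -/
/-- on a vector space, every non-zero solution has g ≡ 1 and f additive. -/
theorem stmt16 {F V M : Type*} [Field F] [AddCommGroup V] [Module F V]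
    (add : M → M → M) (zero : M)
    (hzl : ∀ a : M, add zero a = a) (hzr : ∀ a : M, add a zero = a)
    (cancl : ∀ a b c : M, add a b = add a c → b = c)
    (cancr : ∀ a b c : M, add b a = add c a → b = c)
    (f : V → M) (g : V → F)
    (heq : ∀ s t : V, f (s + g s • t) = add (f s) (f t))
    (hfnz : ∃ s : V, f s ≠ zero) :
    (∀ s : V, g s = 1) ∧ (∀ s t : V, f (s + t) = add (f s) (f t)) := by
  classical
  -- f 0 = zero
  have hf0 : f 0 = zero := by
    have h := heq 0 0
    simp only [smul_zero, add_zero] at h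
    exact cancl (f 0) (f 0) zero (by rw [hzr]; exact h.symm)
  -- key lemma: different g-values force equal f-values
  have keyne : ∀ s s' : V, g s ≠ g s' → f s = f s' := by
    intro s s' h
    have hne : g s' - g s ≠ 0 := sub_ne_zero.mpr (Ne.symm h)
    set u : V := (g s' - g s)⁻¹ • (s - s') with hu
    have hsub : (g s' - g s) • u = s - s' := by
      rw [hu, smul_smul, mul_inv_cancel₀ hne, one_smul]
    have hpt : s + g s • u = s' + g s' • u := by
      calc s + g s • u = s' + ((s - s') + g s • u) := by abel
        _ = s' + ((g s' - g s) • u + g s • u) := by rw [hsub]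
        _ = s' + g s' • u := by rw [sub_smul]; abel
    have h1 := heq s u
    have h2 := heq s' u
    rw [hpt] at h1
    exact cancr (f u) (f s) (f s') (h1.symm.trans h2)
  -- g is constant
  have hconst : ∀ s : V, g s = g 0 := by
    by_contra h
    push_neg at h
    obtain ⟨a, ha⟩ := h
    have hall : ∀ x : V, f x = f 0 := by
      intro x
      by_cases hx : g x = g a
      · exact keyne x 0 (hx ▸ ha)
      · rw [keyne x a hx, keyne a 0 ha]
    obtain ⟨s0, hs0⟩ := hfnz
    exact hs0 ((hall s0).trans hf0)
  -- f (g 0 • t) = f t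
  have hscale : ∀ t : V, f (g 0 • t) = f t := by
    intro t
    have h := heq 0 t
    rw [zero_add, hf0, hzl] at h
    exact h
  -- g 0 = 1
  have hone : g 0 = 1 := by
    by_contra hc
    have hd : g 0 * g 0 - g 0 ≠ 0 := by
      have hg0 : g 0 ≠ 0 := by
        intro h0
        obtain ⟨s0, hs0⟩ := hfnz
        have h := heq 0 s0
        rw [zero_add, h0, zero_smul, hf0, hzl] at h
        exact hs0 h.symm
      intro h
      apply hc
      have : g 0 * (g 0 - 1) = 0 := by ring_nf; linear_combination h
      rcases mul_eq_zero.mp this with h' | h'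
      · exact absurd h' hg0
      · exact sub_eq_zero.mp h'
    -- f (s + (g0*g0) • t) = f (s + g0 • t)
    have hstep : ∀ s t : V, f (s + (g 0 * g 0) • t) = f (s + g 0 • t) := by
      intro s t
      have h1 := heq s (g 0 • t)
      have h2 := heq s t
      rw [hscale t] at h1
      rw [hconst s] at h1 h2
      rw [smul_smul] at h1
      exact h1.trans h2.symm
    -- f constant
    obtain ⟨s0, hs0⟩ := hfnz
    set t : V := (g 0 * g 0 - g 0)⁻¹ • s0 with ht
    have h := hstep (-(g 0 • t)) t
    have harg : -(g 0 • t) + (g 0 * g 0) • t = s0 := by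
      have : (g 0 * g 0 - g 0) • t = s0 := by
        rw [ht, smul_smul, mul_inv_cancel₀ hd, one_smul]
      calc -(g 0 • t) + (g 0 * g 0) • t = (g 0 * g 0 - g 0) • t := by
            rw [sub_smul]; abel
        _ = s0 := this
    rw [harg, neg_add_cancel, hf0] at h
    exact hs0 h
  refine ⟨fun s => (hconst s).trans hone, fun s t => ?_⟩
  have h := heq s t
  rwa [hconst s, hone, one_smul] at h
end

section
/- Let V be a vector space over a field F, M a unital magma with cancellation, f : V → M non-zero, g : V → F, satisfying f(s + g(s)·t) = f(s) + f(t) for all s,t ∈ V. Then for every s ∈ V with f(s) ≠ 0 one has g(s) = 1. -/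
/-- on a vector space, f(s) ≠ 0 implies g(s) = 1. -/
theorem stmt17 {F V M : Type*} [Field F] [AddCommGroup V] [Module F V]
    (add : M → M → M) (zero : M)
    (hzl : ∀ a : M, add zero a = a) (hzr : ∀ a : M, add a zero = a)
    (cancl : ∀ a b c : M, add a b = add a c → b = c)
    (cancr : ∀ a b c : M, add b a = add c a → b = c)
    (f : V → M) (g : V → F)
    (heq : ∀ s t : V, f (s + g s • t) = add (f s) (f t))
    (hfnz : ∃ s : V, f s ≠ zero) :
    ∀ s : V, f s ≠ zero → g s = 1 := by
  intro s hs
  by_contra hg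
  have h1 : (1 : F) - g s ≠ 0 := sub_ne_zero.mpr fun h => hg h.symm
  set t := ((1 : F) - g s)⁻¹ • s with ht
  have key : s + g s • t = t := by
    have : ((1 : F) - g s) • t = s := by
      rw [ht, smul_smul, mul_inv_cancel₀ h1, one_smul]
    calc s + g s • t = ((1 : F) - g s) • t + g s • t := by rw [this]
    _ = t := by rw [← add_smul]; ring_nf; rw [one_smul]
  have h2 : f t = add (f s) (f t) := by have := heq s t; rwa [key] at this
  have h3 : add zero (f t) = add (f s) (f t) := by rw [hzl]; exact h2
  exact hs (cancr (f t) (f s) zero h3.symm)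
end
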